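/- arXiv:2011.08033 — 5 statements merged into one kernel-verified Lean document; each statement's English description precedes it below -/
import Mathlib

section
/- Let d ≥ 1, let D ⊆ ℝ^d be open, let K₀ be a bounded function on D², and define K_t(x,y) := K₀(x,y) + ∫_0^t κ(e^u|x−y|) du for t ≥ 0 and x,y ∈ D. Then for every compact set 𝒦 ⊂ D there exists a constant C > 0 such that for all t ≥ 0 and all x, y ∈ 𝒦: | K_t(x,y) − log( 1 / ( |x−y| ∨ e^{−t} ) ) | ≤ C, where a ∨ b denotes max(a,b). -/
open MeasureTheory Filter

noncomputable section

abbrev Ed (d : ℕ) := EuclideanSpace ℝ (Fin d)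

/-- Positive definite kernel on an open set `U ⊆ ℝ^d`. -/
def PosDefKernel (d : ℕ) (U : Set (Ed d)) (G : Ed d → Ed d → ℝ) : Prop :=
  ∀ ρ : Ed d → ℝ, Continuous ρ → HasCompactSupport ρ → tsupport ρ ⊆ U →
    0 ≤ ∫ x in U, ∫ y in U, G x y * ρ x * ρ y

/-! With `r = |x - y|`, the integrand `κ (e^u r)` equals `1` up to an error `c e^u r` while
`e^u r ≤ 1` (Lipschitz bound at `0`), and vanishes once `e^u r ≥ 1`. So the integral is the length
of the time window `[0, min t (log (1/r))]` up to `c`, and that length is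
`log (1 / max r e^{-t})`, except for an error `log⁺ r` when `r > 1`, bounded on a compact set. -/

open Real Set

section KernelIntegral

variable {κ : ℝ → ℝ} {c : NNReal} {r : ℝ}

theorem LipschitzOnWith.continuous_comp_exp_mul (hlip : LipschitzOnWith c κ (Ici 0))
    (hr : 0 ≤ r) : Continuous fun u => κ (exp u * r) :=
  continuousOn_univ.mp <| hlip.continuousOn.comp (by fun_prop)
    fun u _ => mul_nonneg (exp_pos u).le hr

theorem abs_integral_comp_exp_mul_sub_le (hlip : LipschitzOnWith c κ (Ici 0)) (hκ0 : κ 0 = 1)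
    {t : ℝ} (hr : 0 ≤ r) (ht : 0 ≤ t) (hrt : exp t * r ≤ 1) :
    |(∫ u in (0:ℝ)..t, κ (exp u * r)) - t| ≤ c := by
  have hcont := hlip.continuous_comp_exp_mul hr
  have hpointwise : ∀ u ∈ Icc (0:ℝ) t, |κ (exp u * r) - 1| ≤ c * (exp u * r) := by
    intro u _
    have hu : 0 ≤ exp u * r := mul_nonneg (exp_pos u).le hr
    simpa [Real.dist_eq, hκ0, abs_of_nonneg hu, abs_of_nonneg hr] using
      hlip.dist_le_mul _ (mem_Ici.mpr hu) 0 self_mem_Ici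
  calc |(∫ u in (0:ℝ)..t, κ (exp u * r)) - t|
      = |∫ u in (0:ℝ)..t, (κ (exp u * r) - 1)| := by
        rw [intervalIntegral.integral_sub (hcont.intervalIntegrable 0 t)
          intervalIntegrable_const]
        simp
    _ ≤ ∫ u in (0:ℝ)..t, |κ (exp u * r) - 1| := intervalIntegral.abs_integral_le_integral_abs ht
    _ ≤ ∫ u in (0:ℝ)..t, (c:ℝ) * r * exp u := by
        refine intervalIntegral.integral_mono_on ht
          ((hcont.sub continuous_const).abs.intervalIntegrable _ _)
          ((by fun_prop : Continuous fun u => (c:ℝ) * r * exp u).intervalIntegrable _ _)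
          fun u hu => ?_
        linarith [hpointwise u hu]
    _ = c * (exp t * r) - c * r := by
        rw [intervalIntegral.integral_const_mul, integral_exp, exp_zero]
        ring
    _ ≤ c := by nlinarith [mul_nonneg c.coe_nonneg hr, c.coe_nonneg]

theorem integral_comp_exp_mul_eq_zero (hκ1 : ∀ s : ℝ, 1 ≤ s → κ s = 0) (hr : 0 ≤ r)
    {a b : ℝ} (hab : a ≤ b) (ha : 1 ≤ exp a * r) :
    ∫ u in a..b, κ (exp u * r) = 0 := by
  rw [intervalIntegral.integral_congr (g := fun _ => (0:ℝ)), intervalIntegral.integral_zero]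
  intro u hu
  rw [uIcc_of_le hab] at hu
  exact hκ1 _ (ha.trans (mul_le_mul_of_nonneg_right (exp_le_exp.mpr hu.1) hr))

theorem log_one_div_max_exp_neg (hr : 0 < r) (t : ℝ) :
    log (1 / max r (exp (-t))) = min t (-log r) := by
  rw [one_div, log_inv]
  rcases le_total r (exp (-t)) with h | h
  · have := log_le_log hr h
    rw [log_exp] at this
    rw [max_eq_right h, log_exp, neg_neg, min_eq_left (by linarith)]
  · have := log_le_log (exp_pos _) h
    rw [log_exp] at this
    rw [max_eq_left h, min_eq_right (by linarith)]

theorem abs_integral_comp_exp_mul_sub_log_le (hlip : LipschitzOnWith c κ (Ici 0))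
    (hκ0 : κ 0 = 1) (hκ1 : ∀ s : ℝ, 1 ≤ s → κ s = 0) (hr : 0 ≤ r) {t : ℝ} (ht : 0 ≤ t) :
    |(∫ u in (0:ℝ)..t, κ (exp u * r)) - log (1 / max r (exp (-t)))| ≤ c + log⁺ r := by
  rcases hr.eq_or_lt with rfl | hr
  · rw [max_eq_right (exp_pos _).le, one_div, log_inv, log_exp, neg_neg, posLog_zero, add_zero]
    exact abs_integral_comp_exp_mul_sub_le hlip hκ0 le_rfl ht (by simp)
  rw [log_one_div_max_exp_neg hr]
  rcases le_or_gt r 1 with hr1 | hr1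
  · set T := -log r
    have hT : 0 ≤ T := neg_nonneg.mpr (log_nonpos hr.le hr1)
    have hexpT : exp T * r = 1 := by rw [exp_neg, exp_log hr, inv_mul_cancel₀ hr.ne']
    refine (?_ : _ ≤ (c:ℝ)).trans (le_add_of_nonneg_right posLog_nonneg)
    rcases le_total t T with htT | hTt
    · rw [min_eq_left htT]
      exact abs_integral_comp_exp_mul_sub_le hlip hκ0 hr.le ht
        (hexpT ▸ mul_le_mul_of_nonneg_right (exp_le_exp.mpr htT) hr.le)
    · have hcont := hlip.continuous_comp_exp_mul hr.le
      rw [min_eq_right hTt, ← intervalIntegral.integral_add_adjacent_intervals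
        (hcont.intervalIntegrable 0 T) (hcont.intervalIntegrable T t),
        integral_comp_exp_mul_eq_zero hκ1 hr.le hTt hexpT.ge, add_zero]
      exact abs_integral_comp_exp_mul_sub_le hlip hκ0 hr.le hT hexpT.le
  · have hlog : 0 < log r := log_pos hr1
    rw [integral_comp_exp_mul_eq_zero hκ1 hr.le ht (by simpa using hr1.le),
      min_eq_right (by linarith), posLog_eq_log (by rw [abs_of_pos hr]; exact hr1.le)]
    simp [abs_of_pos hlog]

end KernelIntegral

theorem statement5_general
    (d : ℕ)
    (κ : ℝ → ℝ) (hκlip : ∃ c : NNReal, LipschitzOnWith c κ (Set.Ici 0))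
    (hκ0 : κ 0 = 1)
    (hκ1 : ∀ r : ℝ, 1 ≤ r → κ r = 0)
    (D : Set (Ed d))
    (K₀ : Ed d → Ed d → ℝ) (M : ℝ)
    (hK₀bdd : ∀ x ∈ D, ∀ y ∈ D, |K₀ x y| ≤ M)
    (𝒦 : Set (Ed d)) (h𝒦c : IsCompact 𝒦) (h𝒦D : 𝒦 ⊆ D) :
    ∃ C : ℝ, 0 < C ∧ ∀ t : ℝ, 0 ≤ t → ∀ x ∈ 𝒦, ∀ y ∈ 𝒦,
      |(K₀ x y + ∫ u in (0:ℝ)..t, κ (Real.exp u * ‖x - y‖)) -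
          Real.log (1 / max ‖x - y‖ (Real.exp (-t)))| ≤ C := by
  obtain ⟨c, hlip⟩ := hκlip
  refine ⟨|M| + c + log⁺ (Metric.diam 𝒦) + 1, by positivity [posLog_nonneg (x := Metric.diam 𝒦)], fun t ht x hx y hy => ?_⟩
  have hK : |K₀ x y| ≤ |M| := (hK₀bdd x (h𝒦D hx) y (h𝒦D hy)).trans (le_abs_self M)
  have hdiam : log⁺ ‖x - y‖ ≤ log⁺ (Metric.diam 𝒦) := posLog_le_posLog (norm_nonneg _)
    (dist_eq_norm x y ▸ Metric.dist_le_diam_of_mem h𝒦c.isBounded hx hy)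
  have hI := abs_integral_comp_exp_mul_sub_log_le hlip hκ0 hκ1 (norm_nonneg (x - y)) ht
  rw [add_sub_assoc]
  linarith [abs_add_le (K₀ x y)
    ((∫ u in (0:ℝ)..t, κ (exp u * ‖x - y‖)) - log (1 / max ‖x - y‖ (exp (-t))))]

theorem statement5
    (d : ℕ) (hd : 1 ≤ d)
    (κ : ℝ → ℝ) (hκlip : ∃ c : NNReal, LipschitzOnWith c κ (Set.Ici 0))
    (hκnn : ∀ r : ℝ, 0 ≤ r → 0 ≤ κ r) (hκ0 : κ 0 = 1)
    (hκ1 : ∀ r : ℝ, 1 ≤ r → κ r = 0)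
    (hκpd : PosDefKernel d Set.univ (fun x y => κ ‖x - y‖))
    (D : Set (Ed d)) (hD : IsOpen D)
    (K₀ : Ed d → Ed d → ℝ) (M : ℝ)
    (hK₀bdd : ∀ x ∈ D, ∀ y ∈ D, |K₀ x y| ≤ M)
    (𝒦 : Set (Ed d)) (h𝒦c : IsCompact 𝒦) (h𝒦D : 𝒦 ⊆ D) :
    ∃ C : ℝ, 0 < C ∧ ∀ t : ℝ, 0 ≤ t → ∀ x ∈ 𝒦, ∀ y ∈ 𝒦,
      |(K₀ x y + ∫ u in (0:ℝ)..t, κ (Real.exp u * ‖x - y‖)) -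
          Real.log (1 / max ‖x - y‖ (Real.exp (-t)))| ≤ C :=
  statement5_general d κ hκlip hκ0 hκ1 D K₀ M hK₀bdd 𝒦 h𝒦c h𝒦D
end
end

section
/- Let d ≥ 1, let D ⊆ ℝ^d be open, let L be continuous on D², set K(x,y) := L(x,y) + log(1/|x−y|), and define the mollified kernel K_ε(x,y) := ∫∫ θ_ε(x−z₁) θ_ε(y−z₂) K(z₁,z₂) dz₁ dz₂. Then for every compact set 𝒦 ⊂ D there exist constants C > 0 and ε₀ > 0 such that for all ε ∈ (0,ε₀) with every point of 𝒦 at distance at least 2ε from ℝ^d∖D, and all x, y ∈ 𝒦: | K_ε(x,y) − log( 1 / ( |x−y| ∨ ε ) ) | ≤ C, where a ∨ b denotes max(a,b). -/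
open MeasureTheory Filter Metric Set

noncomputable section

/-- The mollifier `θ_ε(x) = ε^{−d} θ(x/ε)`. -/
def theps (d : ℕ) (θ : Ed d → ℝ) (ε : ℝ) (x : Ed d) : ℝ := (ε ^ d)⁻¹ * θ (ε⁻¹ • x)

namespace Statement6Aux

/-- Key real-number arithmetic bound. -/
lemma log_arith {r ε t : ℝ} (hε : 0 < ε) (hr : 0 ≤ r) (ht : 0 < t)
    (ht1 : t ≤ r + 2 * ε) (ht2 : r - 2 * ε ≤ t) :
    |Real.log (1 / t) - Real.log (1 / max r ε)| ≤
      Real.log 3 + max (Real.log (ε / t)) 0 := by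
  have hm : 0 < max r ε := lt_max_of_lt_right hε
  have hre : r ≤ max r ε := le_max_left _ _
  have hee : ε ≤ max r ε := le_max_right _ _
  have h2 : Real.log t - Real.log (max r ε) ≤ Real.log 3 := by
    have h3m : t ≤ 3 * max r ε := by nlinarith
    have := Real.log_le_log ht h3m
    rw [Real.log_mul (by norm_num) hm.ne'] at this
    linarith
  have h1 : Real.log (max r ε) - Real.log t ≤ Real.log 3 + max (Real.log (ε / t)) 0 := by
    rcases le_or_gt r (3 * ε) with hcase | hcase
    · have hm3 : max r ε ≤ 3 * ε := by
        apply max_le hcase; nlinarith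
      have := Real.log_le_log hm hm3
      rw [Real.log_mul (by norm_num) hε.ne'] at this
      have hdiv : Real.log (ε / t) = Real.log ε - Real.log t :=
        Real.log_div hε.ne' ht.ne'
      have : Real.log (ε / t) ≤ max (Real.log (ε / t)) 0 := le_max_left _ _
      linarith
    · have hmr : max r ε = r := max_eq_left (by linarith)
      have hrt : r ≤ 3 * t := by nlinarith
      have := Real.log_le_log (by linarith : (0:ℝ) < r) hrt
      rw [Real.log_mul (by norm_num) ht.ne'] at this
      have h0 : (0:ℝ) ≤ max (Real.log (ε / t)) 0 := le_max_right _ _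
      rw [hmr]
      linarith
  rw [one_div, one_div, Real.log_inv, Real.log_inv, abs_le]
  constructor <;> [linarith [le_max_right (Real.log (ε / t)) 0]; skip]
  · linarith [le_max_right (Real.log (ε / t)) 0]

/-- 1-dimensional integrability of positive part of `log (1/|s|)`. -/
lemma integrable_g : Integrable (fun s : ℝ => max (Real.log (1 / |s|)) 0) := by
  set φ0 : ℝ → ℝ := Set.indicator (Set.Ioo (0:ℝ) 1) (fun s => s ^ (-(1/2) : ℝ)) with hφ0
  have hφ0int : Integrable φ0 := by
    rw [hφ0, integrable_indicator_iff measurableSet_Ioo]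
    exact (intervalIntegral.integrableOn_Ioo_rpow_iff one_pos).2 (by norm_num)
  have hφ0nn : ∀ s, 0 ≤ φ0 s := by
    intro s
    apply Set.indicator_nonneg
    intro u hu
    exact Real.rpow_nonneg hu.1.le _
  have hmaj : Integrable (fun s : ℝ => 2 * (φ0 s + φ0 (-s))) :=
    (hφ0int.add hφ0int.comp_neg).const_mul 2
  apply hmaj.mono'
  · apply Measurable.aestronglyMeasurable
    exact (Real.measurable_log.comp (measurable_const.div continuous_abs.measurable)).max
      measurable_const
  · filter_upwards with s
    rw [Real.norm_eq_abs, abs_of_nonneg (le_max_right _ _)]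
    rcases le_or_gt 1 |s| with hs | hs
    · have : Real.log (1 / |s|) ≤ 0 := by
        apply Real.log_nonpos (by positivity)
        rw [div_le_one (by linarith)]; linarith
      rw [max_eq_right this]
      have := hφ0nn s; have := hφ0nn (-s); linarith
    · rcases eq_or_lt_of_le (abs_nonneg s) with h0 | h0
      · rw [← h0]
        simp only [div_zero, Real.log_zero, max_self]
        have := hφ0nn s; have := hφ0nn (-s); linarith
      · -- 0 < |s| < 1
        set b := |s| ^ (-(1/2) : ℝ) with hb
        have hbpos : 0 < b := Real.rpow_pos_of_pos h0 _
        have hlogb : Real.log b = -(1/2) * Real.log |s| := Real.log_rpow h0 _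
        have hkey : Real.log (1 / |s|) ≤ 2 * b := by
          have h1 : Real.log b ≤ b - 1 := Real.log_le_sub_one_of_pos hbpos
          rw [one_div, Real.log_inv]
          nlinarith
        have hlognn : 0 ≤ Real.log (1 / |s|) := by
          apply Real.log_nonneg
          rw [le_div_iff₀ h0]; linarith
        rw [max_eq_left hlognn]
        rcases lt_trichotomy s 0 with hsn | hsz | hsp
        · have habs : |s| = -s := abs_of_neg hsn
          have hmem : -s ∈ Set.Ioo (0:ℝ) 1 := ⟨by linarith, by rw [habs] at hs; linarith⟩
          have h1 : φ0 (-s) = b := by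
            simp only [hφ0]
            rw [Set.indicator_of_mem hmem, hb, habs]
          have h2 := hφ0nn s
          linarith
        · exfalso; rw [hsz] at h0; simp at h0
        · have habs : |s| = s := abs_of_pos hsp
          have hmem : s ∈ Set.Ioo (0:ℝ) 1 := ⟨hsp, by rw [habs] at hs; linarith⟩
          have h1 : φ0 s = b := by
            simp only [hφ0]
            rw [Set.indicator_of_mem hmem, hb, habs]
          have h2 := hφ0nn (-s)
          linarith

lemma abs_coord_le_norm {d : ℕ} (x : Ed d) (i : Fin d) : |x i| ≤ ‖x‖ := by
  rw [EuclideanSpace.norm_eq, ← Real.sqrt_sq_eq_abs]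
  apply Real.sqrt_le_sqrt
  calc x i ^ 2 = ‖x i‖ ^ 2 := by rw [Real.norm_eq_abs, sq_abs]
  _ ≤ ∑ j, ‖x j‖ ^ 2 :=
      Finset.single_le_sum (f := fun j => ‖x j‖ ^ 2) (fun j _ => by positivity)
        (Finset.mem_univ i)

/-- d-dimensional integrability of positive part of `log (1/‖u‖)`. -/
lemma integrable_H1 (d : ℕ) (hd : 1 ≤ d) :
    Integrable (fun u : Ed d => max (Real.log (1 / ‖u‖)) 0) := by
  set F : Ed d → ℝ := fun u => max (Real.log (1 / ‖u‖)) 0 with hF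
  have hFmeas : Measurable F :=
    (Real.measurable_log.comp (measurable_const.div continuous_norm.measurable)).max
      measurable_const
  have hFnn : ∀ u, 0 ≤ F u := fun u => le_max_right _ _
  set e := (MeasurableEquiv.toLp 2 (Fin d → ℝ)).symm with he
  have hvp := EuclideanSpace.volume_preserving_symm_measurableEquiv_toLp (Fin d)
  rw [show F = (F ∘ e.symm) ∘ e by ext u; simp [Function.comp]]
  rw [hvp.integrable_comp_emb (MeasurableEquiv.measurableEmbedding _)]
  -- now on pi space
  set i0 : Fin d := ⟨0, hd⟩ with hi0
  set g : ℝ → ℝ := fun s => max (Real.log (1 / |s|)) 0 with hg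
  set gs : Fin d → ℝ → ℝ := fun i => if i = i0 then g else Set.indicator (Set.Icc (-1:ℝ) 1) 1
    with hgs
  have hgs_int : ∀ i, Integrable (gs i) := by
    intro i
    simp only [hgs]
    by_cases h : i = i0
    · rw [if_pos h]
      exact integrable_g
    · rw [if_neg h]
      rw [integrable_indicator_iff measurableSet_Icc]
      apply integrableOn_const measure_Icc_lt_top.ne
  have hgs_nn : ∀ i s, 0 ≤ gs i s := by
    intro i s
    simp only [hgs]
    by_cases h : i = i0
    · rw [if_pos h]; exact le_max_right _ _
    · rw [if_neg h]
      exact Set.indicator_nonneg (fun _ _ => zero_le_one) _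
  have hP : Integrable (fun w : Fin d → ℝ => ∏ i, gs i (w i)) :=
    Integrable.fintype_prod hgs_int
  apply hP.mono'
  · exact (hFmeas.comp e.symm.measurable).aestronglyMeasurable
  · have hae : ∀ᵐ w : Fin d → ℝ, w i0 ≠ 0 := by
      rw [MeasureTheory.volume_pi]
      exact MeasureTheory.Measure.ae_eval_ne _ i0 0
    filter_upwards [hae] with w hw
    have hcoord : ∀ i, (e.symm w : Ed d) i = w i := by
      intro i
      rw [he]
      rfl
    set x : Ed d := e.symm w with hx
    rw [Function.comp_apply, Real.norm_eq_abs, abs_of_nonneg (hFnn _)]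
    by_cases hbig : ∀ j, |w j| ≤ 1
    · have hprod : ∏ i, gs i (w i) = g (w i0) := by
        apply Finset.prod_eq_single_of_mem i0 (Finset.mem_univ _)
        intro j _ hj
        rw [hgs]
        simp only [hj, if_false]
        rw [Set.indicator_of_mem]
        · rfl
        · rw [Set.mem_Icc]
          constructor <;> [linarith [neg_abs_le (w j), hbig j]; linarith [le_abs_self (w j), hbig j]]
      rw [hprod]
      have hw0 : 0 < |w i0| := abs_pos.2 hw
      have hxpos : 0 < ‖x‖ := lt_of_lt_of_le hw0 (by rw [← hcoord i0]; exact abs_coord_le_norm x i0)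
      have hgsval : g (w i0) = max (Real.log (1 / |w i0|)) 0 := rfl
      rw [hgsval]
      apply max_le_max _ le_rfl
      apply Real.log_le_log (by positivity)
      apply one_div_le_one_div_of_le hw0
      rw [← hcoord i0]; exact abs_coord_le_norm x i0
    · push_neg at hbig
      obtain ⟨j, hj⟩ := hbig
      have hxnorm : 1 < ‖x‖ := lt_of_lt_of_le hj (by rw [← hcoord j]; exact abs_coord_le_norm x j)
      have : F x = 0 := by
        rw [hF]
        apply max_eq_right
        apply Real.log_nonpos (by positivity)
        rw [div_le_one (by linarith)]; linarith
      rw [this]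
      exact Finset.prod_nonneg (fun i _ => hgs_nn i (w i))

end Statement6Aux

set_option maxHeartbeats 2000000 in
theorem statement6
    (d : ℕ) (hd : 1 ≤ d)
    (θ : Ed d → ℝ) (hθsmooth : ContDiff ℝ (⊤ : ℕ∞) θ) (hθnn : ∀ x, 0 ≤ θ x)
    (hθsupp : tsupport θ ⊆ Metric.closedBall 0 1) (hθint : ∫ x : Ed d, θ x = 1)
    (D : Set (Ed d)) (hD : IsOpen D)
    (K L : Ed d → Ed d → ℝ)
    (hLcont : ContinuousOn (fun p : Ed d × Ed d => L p.1 p.2) (D ×ˢ D))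
    (hKdef : ∀ x ∈ D, ∀ y ∈ D, x ≠ y → K x y = L x y + Real.log (1 / ‖x - y‖))
    (𝒦 : Set (Ed d)) (h𝒦c : IsCompact 𝒦) (h𝒦D : 𝒦 ⊆ D) :
    ∃ C : ℝ, 0 < C ∧ ∃ ε₀ : ℝ, 0 < ε₀ ∧
      ∀ ε : ℝ, 0 < ε → ε < ε₀ →
        (∀ x ∈ 𝒦, ∀ y : Ed d, y ∉ D → 2 * ε ≤ dist x y) →
        ∀ x ∈ 𝒦, ∀ y ∈ 𝒦,
          |(∫ z : Ed d × Ed d, theps d θ ε (x - z.1) * theps d θ ε (y - z.2) * K z.1 z.2) -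
              Real.log (1 / max ‖x - y‖ ε)| ≤ C := by
  classical
  haveI : Nontrivial (Ed d) := Module.nontrivial_of_finrank_pos (R := ℝ)
    (by rw [finrank_euclideanSpace_fin]; omega)
  have hlog3 : 0 ≤ Real.log 3 := Real.log_nonneg (by norm_num)
  obtain ⟨ε₀, hε₀pos, hthick⟩ := h𝒦c.exists_cthickening_subset_open hD h𝒦D
  have h𝒦'c : IsCompact (Metric.cthickening ε₀ 𝒦) := h𝒦c.cthickening
  obtain ⟨M, hM⟩ := (h𝒦'c.prod h𝒦'c).exists_bound_of_continuousOn
    (hLcont.mono (Set.prod_mono hthick hthick))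
  set M' : ℝ := max M 0 with hM'def
  have hM'0 : 0 ≤ M' := le_max_right _ _
  have hθcs : HasCompactSupport θ :=
    IsCompact.of_isClosed_subset (isCompact_closedBall 0 1) (isClosed_tsupport θ) hθsupp
  obtain ⟨T, hT⟩ := hθcs.exists_bound_of_continuous hθsmooth.continuous
  have hTθ : ∀ w, θ w ≤ T := fun w => (le_abs_self _).trans (by simpa [Real.norm_eq_abs] using hT w)
  have hT0 : 0 ≤ T := le_trans (hθnn 0) (hTθ 0)
  set CH : ℝ := ∫ u : Ed d, max (Real.log (1 / ‖u‖)) 0 with hCHdef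
  have hCH0 : 0 ≤ CH := integral_nonneg fun u => le_max_right _ _
  set V₁ : ℝ := (volume (Metric.closedBall (0 : Ed d) 1)).toReal with hV₁def
  have hV₁0 : 0 ≤ V₁ := ENNReal.toReal_nonneg
  refine ⟨(M' + Real.log 3) * (T ^ 2 * V₁ ^ 2) + T ^ 2 * V₁ * CH + 1, ?_, ε₀, hε₀pos, ?_⟩
  · have h1 : 0 ≤ (M' + Real.log 3) * (T ^ 2 * V₁ ^ 2) :=
      mul_nonneg (by linarith) (by positivity)
    have h2 : 0 ≤ T ^ 2 * V₁ * CH := by positivity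
    linarith
  intro ε hε hεε₀ _ x hx y hy
  have hεd : (0:ℝ) < ε ^ d := by positivity
  have hball : ∀ a ∈ 𝒦, Metric.closedBall a ε ⊆ Metric.cthickening ε₀ 𝒦 := by
    intro a ha
    exact (closedBall_subset_cthickening ha ε).trans (cthickening_mono hεε₀.le 𝒦)
  -- support of the mollifier
  have hsupp : ∀ a b : Ed d, theps d θ ε (a - b) ≠ 0 → b ∈ Metric.closedBall a ε := by
    intro a b hne
    have hθne : θ (ε⁻¹ • (a - b)) ≠ 0 := by
      intro h; apply hne; simp [theps, h]
    have hmem : ε⁻¹ • (a - b) ∈ tsupport θ := subset_tsupport θ hθne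
    have h1 := hθsupp hmem
    rw [Metric.mem_closedBall, dist_zero_right, norm_smul, Real.norm_eq_abs,
      abs_of_pos (inv_pos.2 hε)] at h1
    have h2 : ‖a - b‖ ≤ ε * 1 := (inv_mul_le_iff₀ hε).1 h1
    rw [Metric.mem_closedBall, dist_eq_norm, ← norm_neg]
    simpa [neg_sub] using h2
  have hθε_nn : ∀ w, 0 ≤ theps d θ ε w := fun w => mul_nonneg (by positivity) (hθnn _)
  have hθε_le : ∀ w, theps d θ ε w ≤ (ε ^ d)⁻¹ * T := fun w =>
    mul_le_mul_of_nonneg_left (hTθ _) (by positivity)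
  set f : Ed d × Ed d → ℝ := fun z => theps d θ ε (x - z.1) * theps d θ ε (y - z.2) with hfdef
  have hf_nn : ∀ z, 0 ≤ f z := fun z => mul_nonneg (hθε_nn _) (hθε_nn _)
  set Acst : ℝ := ((ε ^ d)⁻¹ * T) ^ 2 with hAdef
  have hA0 : 0 ≤ Acst := sq_nonneg _
  have hf_le : ∀ z, f z ≤ Acst := by
    intro z
    rw [hAdef, sq]
    exact mul_le_mul (hθε_le _) (hθε_le _) (hθε_nn _) (by positivity)
  have hθεcont : Continuous (theps d θ ε) :=
    continuous_const.mul (hθsmooth.continuous.comp (continuous_id.const_smul ε⁻¹))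
  have hfcont : Continuous f :=
    (hθεcont.comp (continuous_const.sub continuous_fst)).mul
      (hθεcont.comp (continuous_const.sub continuous_snd))
  have hfCS : HasCompactSupport f := by
    apply HasCompactSupport.intro ((isCompact_closedBall x ε).prod (isCompact_closedBall y ε))
    intro z hz
    by_contra hfz
    exact hz ⟨hsupp x z.1 (mul_ne_zero_iff.1 hfz).1, hsupp y z.2 (mul_ne_zero_iff.1 hfz).2⟩
  have hf_int : Integrable f := hfcont.integrable_of_hasCompactSupport hfCS
  have hmass1 : ∀ a : Ed d, (∫ w : Ed d, theps d θ ε (a - w)) = 1 := by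
    intro a
    rw [integral_sub_left_eq_self (theps d θ ε) volume a]
    simp only [theps]
    rw [MeasureTheory.integral_const_mul,
      MeasureTheory.Measure.integral_comp_inv_smul_of_nonneg volume θ hε.le,
      finrank_euclideanSpace_fin, hθint, smul_eq_mul, mul_one]
    exact inv_mul_cancel₀ hεd.ne'
  have hmass : (∫ z : Ed d × Ed d, f z) = 1 := by
    rw [hfdef, MeasureTheory.Measure.volume_eq_prod,
      integral_prod_mul (fun z₁ => theps d θ ε (x - z₁)) (fun z₂ => theps d θ ε (y - z₂)),
      hmass1 x, hmass1 y, mul_one]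
  set r : ℝ := ‖x - y‖ with hrdef
  set m : ℝ := max r ε with hmdef
  have hm0 : 0 < m := lt_max_of_lt_right hε
  set c : ℝ := Real.log (1 / m) with hcdef
  set Hε : Ed d → ℝ := fun w => max (Real.log (ε / ‖w‖)) 0 with hHdef
  have hHnn : ∀ w, 0 ≤ Hε w := fun w => le_max_right _ _
  have hH_comp : Hε = fun w : Ed d =>
      (fun u : Ed d => max (Real.log (1 / ‖u‖)) 0) (ε⁻¹ • w) := by
    funext w
    simp only [hHdef]
    congr 2
    rw [norm_smul, Real.norm_eq_abs, abs_of_pos (inv_pos.2 hε), one_div, mul_inv, inv_inv,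
      div_eq_mul_inv]
  have hHε_int : Integrable Hε := by
    rw [hH_comp]
    exact (MeasureTheory.integrable_comp_smul_iff volume
      (fun u : Ed d => max (Real.log (1 / ‖u‖)) 0) (inv_ne_zero hε.ne')).2
      (Statement6Aux.integrable_H1 d hd)
  have hHε_val : (∫ w, Hε w) = ε ^ d * CH := by
    rw [hH_comp, MeasureTheory.Measure.integral_comp_inv_smul_of_nonneg volume _ hε.le,
      finrank_euclideanSpace_fin, smul_eq_mul, hCHdef]
  set indB : Ed d → ℝ := Set.indicator (Metric.closedBall x ε) 1 with hindBdef
  set indB' : Ed d → ℝ := Set.indicator (Metric.closedBall y ε) 1 with hindB'def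
  have hind_int : Integrable indB := by
    rw [hindBdef, integrable_indicator_iff measurableSet_closedBall]
    exact integrableOn_const measure_closedBall_lt_top.ne
  have hind'_int : Integrable indB' := by
    rw [hindB'def, integrable_indicator_iff measurableSet_closedBall]
    exact integrableOn_const measure_closedBall_lt_top.ne
  have hVε : (volume (Metric.closedBall x ε)).toReal = ε ^ d * V₁ := by
    rw [MeasureTheory.Measure.addHaar_closedBall' volume x hε.le, finrank_euclideanSpace_fin,
      ENNReal.toReal_mul, ENNReal.toReal_ofReal (by positivity), ← hV₁def]
  have hVε' : (volume (Metric.closedBall y ε)).toReal = ε ^ d * V₁ := by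
    rw [MeasureTheory.Measure.addHaar_closedBall' volume y hε.le, finrank_euclideanSpace_fin,
      ENNReal.toReal_mul, ENNReal.toReal_ofReal (by positivity), ← hV₁def]
  have hind_val : (∫ w, indB w) = ε ^ d * V₁ := by
    rw [hindBdef, integral_indicator_one measurableSet_closedBall, measureReal_def, hVε]
  have hind'_val : (∫ w, indB' w) = ε ^ d * V₁ := by
    rw [hindB'def, integral_indicator_one measurableSet_closedBall, measureReal_def, hVε']
  have hind_nn : ∀ w, 0 ≤ indB w := fun w => Set.indicator_nonneg (fun _ _ => zero_le_one) _
  have hind'_nn : ∀ w, 0 ≤ indB' w := fun w => Set.indicator_nonneg (fun _ _ => zero_le_one) _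
  set ψ₁ : Ed d × Ed d → ℝ := fun z => indB z.1 * indB' z.2 with hψ₁def
  set ψ₂ : Ed d × Ed d → ℝ := fun z => indB z.1 * Hε (z.1 - z.2) with hψ₂def
  have hψ₁_int : Integrable ψ₁ := by
    have h := hind_int.mul_prod hind'_int
    rwa [← MeasureTheory.Measure.volume_eq_prod] at h
  have hψ₁_val : (∫ z, ψ₁ z) = (ε ^ d * V₁) * (ε ^ d * V₁) := by
    rw [hψ₁def, MeasureTheory.Measure.volume_eq_prod, integral_prod_mul indB indB', hind_val, hind'_val]
  -- the shear map
  have hMP := measurePreserving_prod_sub (volume : Measure (Ed d)) volume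
  have hemb : MeasurableEmbedding (fun z : Ed d × Ed d => (z.1, z.2 - z.1)) :=
    (MeasurableEquiv.shearSubRight (Ed d)).measurableEmbedding
  have hW_int : Integrable (fun p : Ed d × Ed d => indB p.1 * Hε p.2) (volume.prod volume) :=
    hind_int.mul_prod hHε_int
  have hψ₂_eq : ψ₂ = (fun p : Ed d × Ed d => indB p.1 * Hε p.2) ∘
      (fun z : Ed d × Ed d => (z.1, z.2 - z.1)) := by
    funext z
    simp only [hψ₂def, Function.comp_apply, hHdef]
    rw [norm_sub_rev]
  have hψ₂_int : Integrable ψ₂ := by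
    have h := (hMP.integrable_comp_emb hemb).2 hW_int
    rw [← hψ₂_eq, ← MeasureTheory.Measure.volume_eq_prod] at h
    exact h
  have hψ₂_val : (∫ z, ψ₂ z) = (ε ^ d * V₁) * (ε ^ d * CH) := by
    rw [hψ₂_eq]
    have h1 : (∫ z : Ed d × Ed d, ((fun p : Ed d × Ed d => indB p.1 * Hε p.2) ∘
        (fun z : Ed d × Ed d => (z.1, z.2 - z.1))) z) =
        ∫ p : Ed d × Ed d, indB p.1 * Hε p.2 ∂(volume.prod volume) := by
      rw [MeasureTheory.Measure.volume_eq_prod]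
      exact hMP.integral_comp hemb (fun p : Ed d × Ed d => indB p.1 * Hε p.2)
    rw [h1, integral_prod_mul indB Hε, hind_val, hHε_val]
  -- diagonal is null
  have hdiag_null : (volume : Measure (Ed d × Ed d)) {z | z.1 = z.2} = 0 := by
    have hms : MeasurableSet {z : Ed d × Ed d | z.1 = z.2} :=
      (isClosed_eq continuous_fst continuous_snd).measurableSet
    rw [MeasureTheory.Measure.volume_eq_prod, MeasureTheory.Measure.prod_apply hms]
    have hfib : ∀ a : Ed d, (Prod.mk a ⁻¹' {z : Ed d × Ed d | z.1 = z.2}) = {a} := by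
      intro a; ext b; simp [eq_comm]
    simp [hfib, measure_singleton]
  have hae_ne : ∀ᵐ z : Ed d × Ed d, z.1 ≠ z.2 := by
    rw [MeasureTheory.ae_iff]
    simpa using hdiag_null
  set U : Set (Ed d × Ed d) := (D ×ˢ D) \ {z : Ed d × Ed d | z.1 = z.2} with hUdef
  have hUm : MeasurableSet U :=
    ((hD.prod hD).measurableSet).diff (isClosed_eq continuous_fst continuous_snd).measurableSet
  set KK : Ed d × Ed d → ℝ := fun z => L z.1 z.2 + Real.log (1 / ‖z.1 - z.2‖) with hKKdef
  set G : Ed d × Ed d → ℝ := U.indicator (fun z => f z * KK z) with hGdef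
  have hzmem : ∀ z : Ed d × Ed d, f z ≠ 0 → z.1 ∈ Metric.cthickening ε₀ 𝒦 ∧
      z.2 ∈ Metric.cthickening ε₀ 𝒦 := by
    intro z hfz
    exact ⟨hball x hx (hsupp x z.1 (mul_ne_zero_iff.1 hfz).1),
      hball y hy (hsupp y z.2 (mul_ne_zero_iff.1 hfz).2)⟩
  have hae_eq : (fun z : Ed d × Ed d => f z * K z.1 z.2) =ᵐ[volume] G := by
    filter_upwards [hae_ne] with z hz
    by_cases hfz : f z = 0
    · simp [hGdef, Set.indicator_apply, hfz]
    · obtain ⟨hz1, hz2⟩ := hzmem z hfz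
      have hzU : z ∈ U := ⟨Set.mem_prod.2 ⟨hthick hz1, hthick hz2⟩, hz⟩
      rw [hGdef, Set.indicator_of_mem hzU]
      simp only [hKKdef]
      rw [hKdef z.1 (hthick hz1) z.2 (hthick hz2) hz]
  have hGsm : AEStronglyMeasurable G volume := by
    rw [hGdef, aestronglyMeasurable_indicator_iff hUm]
    apply AEStronglyMeasurable.mul
    · exact hfcont.aestronglyMeasurable.restrict
    · apply AEStronglyMeasurable.add
      · exact (hLcont.mono Set.diff_subset).aestronglyMeasurable hUm
      · exact (Real.measurable_log.comp (measurable_const.div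
          ((continuous_fst.sub continuous_snd).norm.measurable))).aestronglyMeasurable.restrict
  set ψ : Ed d × Ed d → ℝ := fun z =>
    (Acst * (M' + Real.log 3)) * ψ₁ z + Acst * ψ₂ z with hψdef
  have hψ_int : Integrable ψ := (hψ₁_int.const_mul _).add (hψ₂_int.const_mul _)
  have hbound : ∀ᵐ z : Ed d × Ed d, ‖G z - c * f z‖ ≤ ψ z := by
    filter_upwards [hae_ne] with z hz
    have hψ₁nn : 0 ≤ ψ₁ z := mul_nonneg (hind_nn _) (hind'_nn _)
    have hψ₂nn : 0 ≤ ψ₂ z := mul_nonneg (hind_nn _) (hHnn _)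
    by_cases hfz : f z = 0
    · have hG0 : G z = 0 := by simp [hGdef, Set.indicator_apply, hfz]
      rw [hG0, hfz, mul_zero, sub_zero, norm_zero, hψdef]
      exact add_nonneg (mul_nonneg (mul_nonneg hA0 (by linarith)) hψ₁nn)
        (mul_nonneg hA0 hψ₂nn)
    · obtain ⟨hz1, hz2⟩ := hzmem z hfz
      have hz1b : z.1 ∈ Metric.closedBall x ε := hsupp x z.1 (mul_ne_zero_iff.1 hfz).1
      have hz2b : z.2 ∈ Metric.closedBall y ε := hsupp y z.2 (mul_ne_zero_iff.1 hfz).2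
      have hzU : z ∈ U := ⟨Set.mem_prod.2 ⟨hthick hz1, hthick hz2⟩, hz⟩
      have hGz : G z = f z * KK z := by rw [hGdef, Set.indicator_of_mem hzU]
      have ht : 0 < ‖z.1 - z.2‖ := by rw [norm_pos_iff]; exact sub_ne_zero.2 hz
      have he1 : ‖z.1 - x‖ ≤ ε := by
        rw [Metric.mem_closedBall, dist_eq_norm] at hz1b; exact hz1b
      have he2 : ‖z.2 - y‖ ≤ ε := by
        rw [Metric.mem_closedBall, dist_eq_norm] at hz2b; exact hz2b
      have ht1 : ‖z.1 - z.2‖ ≤ r + 2 * ε := by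
        have heq : z.1 - z.2 = (z.1 - x) + ((x - y) + (y - z.2)) := by abel
        have hyz : ‖y - z.2‖ = ‖z.2 - y‖ := norm_sub_rev _ _
        calc ‖z.1 - z.2‖ ≤ ‖z.1 - x‖ + (‖x - y‖ + ‖y - z.2‖) := by
              rw [heq]; exact (norm_add_le _ _).trans (by gcongr; exact norm_add_le _ _)
        _ ≤ ε + (r + ε) := by rw [hyz, ← hrdef]; gcongr
        _ = r + 2 * ε := by ring
      have ht2 : r - 2 * ε ≤ ‖z.1 - z.2‖ := by
        have heq : x - y = (x - z.1) + ((z.1 - z.2) + (z.2 - y)) := by abel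
        have hxz : ‖x - z.1‖ = ‖z.1 - x‖ := norm_sub_rev _ _
        have : r ≤ ‖x - z.1‖ + (‖z.1 - z.2‖ + ‖z.2 - y‖) := by
          rw [hrdef, heq]
          exact (norm_add_le _ _).trans (by gcongr; exact norm_add_le _ _)
        rw [hxz] at this
        linarith
      have harith := Statement6Aux.log_arith hε (norm_nonneg (x - y)) ht ht1 ht2
      rw [← hrdef, ← hmdef] at harith
      have hLb : |L z.1 z.2| ≤ M' := by
        have := hM (z.1, z.2) (Set.mem_prod.2 ⟨hz1, hz2⟩)
        rw [Real.norm_eq_abs] at this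
        exact this.trans (le_max_left _ _)
      have hKb : |KK z - c| ≤ M' + (Real.log 3 + max (Real.log (ε / ‖z.1 - z.2‖)) 0) := by
        have heq : KK z - c = L z.1 z.2 +
            (Real.log (1 / ‖z.1 - z.2‖) - Real.log (1 / m)) := by
          simp only [hKKdef, hcdef]; ring
        rw [heq]
        exact (abs_add_le _ _).trans (add_le_add hLb harith)
      rw [hGz]
      have heq2 : f z * KK z - c * f z = f z * (KK z - c) := by ring
      rw [heq2, Real.norm_eq_abs, abs_mul, abs_of_nonneg (hf_nn z)]
      have hψ₁z : ψ₁ z = 1 := by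
        simp only [hψ₁def, hindBdef, hindB'def]
        rw [Set.indicator_of_mem hz1b, Set.indicator_of_mem hz2b]
        simp
      have hψ₂z : ψ₂ z = max (Real.log (ε / ‖z.1 - z.2‖)) 0 := by
        simp only [hψ₂def, hindBdef, hHdef]
        rw [Set.indicator_of_mem hz1b]
        simp
      rw [hψdef]
      calc f z * |KK z - c|
          ≤ Acst * (M' + (Real.log 3 + max (Real.log (ε / ‖z.1 - z.2‖)) 0)) :=
            mul_le_mul (hf_le z) hKb (abs_nonneg _) hA0
      _ = (Acst * (M' + Real.log 3)) * 1 + Acst * max (Real.log (ε / ‖z.1 - z.2‖)) 0 := by ring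
      _ = (Acst * (M' + Real.log 3)) * ψ₁ z + Acst * ψ₂ z := by rw [hψ₁z, hψ₂z]
  have hGc_sm : AEStronglyMeasurable (fun z : Ed d × Ed d => G z - c * f z) volume :=
    hGsm.sub ((continuous_const.mul hfcont).aestronglyMeasurable)
  have hGc_int : Integrable (fun z : Ed d × Ed d => G z - c * f z) :=
    hψ_int.mono' hGc_sm hbound
  have hG_int : Integrable G := by
    have heq : G = fun z => (G z - c * f z) + c * f z := by funext z; ring
    rw [heq]
    exact hGc_int.add (hf_int.const_mul c)
  have hIeq : (∫ z : Ed d × Ed d, theps d θ ε (x - z.1) * theps d θ ε (y - z.2) * K z.1 z.2)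
      = ∫ z, G z := by
    have h0 : (fun z : Ed d × Ed d => theps d θ ε (x - z.1) * theps d θ ε (y - z.2) * K z.1 z.2)
        = fun z : Ed d × Ed d => f z * K z.1 z.2 := rfl
    rw [h0]
    exact integral_congr_ae hae_eq
  have hsub : (∫ z, G z) - c = ∫ z : Ed d × Ed d, (G z - c * f z) := by
    rw [integral_sub hG_int (hf_int.const_mul c), MeasureTheory.integral_const_mul, hmass,
      mul_one]
  have hfinal : |(∫ z, G z) - c| ≤ ∫ z, ψ z := by
    rw [hsub, ← Real.norm_eq_abs]
    exact norm_integral_le_of_norm_le hψ_int hbound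
  have hψval : (∫ z, ψ z) = (Acst * (M' + Real.log 3)) * ((ε ^ d * V₁) * (ε ^ d * V₁))
      + Acst * ((ε ^ d * V₁) * (ε ^ d * CH)) := by
    rw [hψdef]
    rw [integral_add (hψ₁_int.const_mul _) (hψ₂_int.const_mul _),
      MeasureTheory.integral_const_mul, MeasureTheory.integral_const_mul, hψ₁_val, hψ₂_val]
  have hcancel : (ε ^ d)⁻¹ * ε ^ d = 1 := inv_mul_cancel₀ hεd.ne'
  have hconst : (∫ z, ψ z) = (M' + Real.log 3) * (T ^ 2 * V₁ ^ 2) + T ^ 2 * V₁ * CH := by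
    rw [hψval, hAdef]
    field_simp
  rw [hIeq]
  calc |(∫ z, G z) - c| ≤ ∫ z, ψ z := hfinal
  _ = (M' + Real.log 3) * (T ^ 2 * V₁ ^ 2) + T ^ 2 * V₁ * CH := hconst
  _ ≤ (M' + Real.log 3) * (T ^ 2 * V₁ ^ 2) + T ^ 2 * V₁ * CH + 1 := by linarith


end
end

section
/- Let d ≥ 1 and g > d. Define K̂_t(z) := ∫_0^t κ(e^u|z|) du for z ∈ ℝ^d and t ≥ 0, and Λ(y) := ∫_0^∞ (1 − κ(e^{−s}|y|)) ds, which is finite for every y ∈ ℝ^d. Then ∫_{ℝ^d} e^{−g Λ(y)} dy < ∞ and lim_{t→∞} e^{(d−g)t} ∫_{|z|≤1} ( e^{g K̂_t(z)} − 1 ) dz = ∫_{ℝ^d} e^{−g Λ(y)} dy. -/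
/-! Substituting `z = e^{-t} y` turns `K̂_t(z)` into `t - Λ_t(y)`, where `Λ_t` (`LamTrunc`) is `Λ`
with the integral truncated at time `t`; so the quantity in the limit is
`∫_{|y| ≤ e^t} e^{-g Λ_t(y)} dy - e^{(d-g)t} |B_1|`. As `|1 - κ r| ≤ c r`, the tail of `Λ`
beyond `t` is at most `c |y| e^{-t} ≤ c` on that ball, and as `κ` vanishes on `[1, ∞)`,
`Λ(y) ≥ log (1 + |y|) - log 2 - c`. Hence `e^{-g Λ_t}` is dominated by a multiple of
`(1 + |y|)^{-g}`, which is integrable for `g > d`, and dominated convergence concludes. -/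

open MeasureTheory Filter

noncomputable section

/-- `K̂_t(z) = ∫_0^t κ(e^u |z|) du`. -/
def Khatt (d : ℕ) (κ : ℝ → ℝ) (t : ℝ) (z : Ed d) : ℝ :=
  ∫ u in (0:ℝ)..t, κ (Real.exp u * ‖z‖)

/-- `Λ(y) = ∫_0^∞ (1 − κ(e^{−s} |y|)) ds`. -/
def Lam (d : ℕ) (κ : ℝ → ℝ) (y : Ed d) : ℝ :=
  ∫ s in Set.Ioi (0:ℝ), (1 - κ (Real.exp (-s) * ‖y‖))

open Real Set Topology

section Profile

variable {κ : ℝ → ℝ} {c : NNReal}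

lemma abs_one_sub_comp_exp_neg_le (hκ : LipschitzOnWith c κ (Ici 0)) (hκ0 : κ 0 = 1)
    {a : ℝ} (ha : 0 ≤ a) (s : ℝ) : |1 - κ (exp (-s) * a)| ≤ c * a * exp (-s) := by
  have hr : 0 ≤ exp (-s) * a := by positivity
  have h := hκ.dist_le_mul _ hr 0 self_mem_Ici
  rw [hκ0, Real.dist_eq, Real.dist_eq, sub_zero, abs_of_nonneg hr, abs_sub_comm] at h
  linarith

lemma continuous_comp_exp_neg_mul (hκ : ContinuousOn κ (Ici 0)) {a : ℝ} (ha : 0 ≤ a) :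
    Continuous fun s => κ (exp (-s) * a) :=
  hκ.comp_continuous (by fun_prop) fun s => mem_Ici.2 (by positivity)

lemma integrableOn_one_sub_comp_exp_neg (hκ : LipschitzOnWith c κ (Ici 0)) (hκ0 : κ 0 = 1)
    {a : ℝ} (ha : 0 ≤ a) (t : ℝ) :
    IntegrableOn (fun s => 1 - κ (exp (-s) * a)) (Ioi t) :=
  ((integrableOn_exp_neg_Ioi t).const_mul (c * a)).mono'
    (continuous_const.sub (continuous_comp_exp_neg_mul hκ.continuousOn ha)).aestronglyMeasurable
    (ae_of_all _ fun s => abs_one_sub_comp_exp_neg_le hκ hκ0 ha s)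

lemma abs_setIntegral_Ioi_one_sub_comp_exp_neg_le (hκ : LipschitzOnWith c κ (Ici 0))
    (hκ0 : κ 0 = 1) {a : ℝ} (ha : 0 ≤ a) (t : ℝ) :
    |∫ s in Ioi t, (1 - κ (exp (-s) * a))| ≤ c * a * exp (-t) := by
  have h := norm_integral_le_of_norm_le (f := fun s => 1 - κ (exp (-s) * a))
    ((integrableOn_exp_neg_Ioi t).const_mul (c * a))
    (ae_of_all _ fun s => abs_one_sub_comp_exp_neg_le hκ hκ0 ha s)
  rwa [integral_const_mul, integral_exp_neg_Ioi] at h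

end Profile

def LamTrunc (d : ℕ) (κ : ℝ → ℝ) (t : ℝ) (y : Ed d) : ℝ :=
  ∫ s in (0:ℝ)..t, (1 - κ (exp (-s) * ‖y‖))

section Lam

variable {d : ℕ} {κ : ℝ → ℝ} {c : NNReal}

lemma lam_eq_lamTrunc_add (hκ : LipschitzOnWith c κ (Ici 0)) (hκ0 : κ 0 = 1) (y : Ed d)
    {t : ℝ} (ht : 0 ≤ t) :
    Lam d κ y = LamTrunc d κ t y + ∫ s in Ioi t, (1 - κ (exp (-s) * ‖y‖)) := by
  have hint := integrableOn_one_sub_comp_exp_neg hκ hκ0 (norm_nonneg y)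
  rw [Lam, LamTrunc, intervalIntegral.integral_of_le ht, ← Ioc_union_Ioi_eq_Ioi ht,
    setIntegral_union (Ioc_disjoint_Ioi le_rfl) measurableSet_Ioi
      ((hint 0).mono_set Ioc_subset_Ioi_self) (hint t)]

lemma lamTrunc_eq_self (hκ1 : ∀ r : ℝ, 1 ≤ r → κ r = 0) {t : ℝ} (ht : 0 ≤ t) {y : Ed d}
    (hy : exp t ≤ ‖y‖) : LamTrunc d κ t y = t := by
  have hone : ∀ s ∈ uIcc 0 t, 1 - κ (exp (-s) * ‖y‖) = 1 := fun s hs => by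
    rw [uIcc_of_le ht] at hs
    have hsy : exp s ≤ ‖y‖ := (exp_le_exp.2 hs.2).trans hy
    rw [hκ1 _ (by rwa [exp_neg, inv_mul_eq_div, one_le_div (exp_pos s)]), sub_zero]
  rw [LamTrunc, intervalIntegral.integral_congr hone]
  simp

lemma lam_le_lamTrunc_add (hκ : LipschitzOnWith c κ (Ici 0)) (hκ0 : κ 0 = 1) {t : ℝ}
    (ht : 0 ≤ t) {y : Ed d} (hy : ‖y‖ ≤ exp t) : Lam d κ y ≤ LamTrunc d κ t y + c := by
  have htail := abs_setIntegral_Ioi_one_sub_comp_exp_neg_le hκ hκ0 (norm_nonneg y) t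
  have hc : (c : ℝ) * ‖y‖ * exp (-t) ≤ c := by
    rw [mul_assoc, exp_neg, ← div_eq_mul_inv]
    exact mul_le_of_le_one_right c.coe_nonneg ((div_le_one (exp_pos t)).2 hy)
  rw [lam_eq_lamTrunc_add hκ hκ0 y ht]
  linarith [le_abs_self (∫ s in Ioi t, (1 - κ (exp (-s) * ‖y‖)))]

lemma log_one_add_norm_le_lam (hκ : LipschitzOnWith c κ (Ici 0)) (hκ0 : κ 0 = 1)
    (hκ1 : ∀ r : ℝ, 1 ≤ r → κ r = 0) (y : Ed d) :
    log (1 + ‖y‖) ≤ Lam d κ y + (log 2 + c) := by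
  rcases le_or_gt 1 ‖y‖ with hy | hy
  · set L := log ‖y‖
    have hy0 : 0 < ‖y‖ := one_pos.trans_le hy
    have hL : 0 ≤ L := log_nonneg hy
    have htail := abs_setIntegral_Ioi_one_sub_comp_exp_neg_le hκ hκ0 hy0.le L
    rw [exp_neg, exp_log hy0, mul_assoc, mul_inv_cancel₀ hy0.ne', mul_one] at htail
    have hlog : log (1 + ‖y‖) ≤ log 2 + L := by
      rw [← log_mul two_ne_zero hy0.ne']
      exact log_le_log (by positivity) (by linarith)
    rw [lam_eq_lamTrunc_add hκ hκ0 y hL, lamTrunc_eq_self hκ1 hL (exp_log hy0).le]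
    linarith [neg_abs_le (∫ s in Ioi L, (1 - κ (exp (-s) * ‖y‖)))]
  · have hΛ := abs_setIntegral_Ioi_one_sub_comp_exp_neg_le hκ hκ0 (norm_nonneg y) 0
    rw [neg_zero, exp_zero, mul_one] at hΛ
    have hlog : log (1 + ‖y‖) ≤ log 2 := log_le_log (by positivity) (by linarith)
    have hc : (c : ℝ) * ‖y‖ ≤ c := mul_le_of_le_one_right c.coe_nonneg hy.le
    have hlog2 := log_nonneg one_le_two
    rw [Lam]
    linarith [neg_abs_le (∫ s in Ioi (0:ℝ), (1 - κ (exp (-s) * ‖y‖)))]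

lemma exp_neg_mul_lam_le (hκ : LipschitzOnWith c κ (Ici 0)) (hκ0 : κ 0 = 1)
    (hκ1 : ∀ r : ℝ, 1 ≤ r → κ r = 0) {g : ℝ} (hg : 0 ≤ g) (y : Ed d) :
    exp (-g * Lam d κ y) ≤ exp (g * (log 2 + c)) * (1 + ‖y‖) ^ (-g) := by
  rw [rpow_def_of_pos (by positivity), ← exp_add]
  exact exp_le_exp.2 (by nlinarith [log_one_add_norm_le_lam hκ hκ0 hκ1 y])

lemma continuous_lamTrunc (hκ : ContinuousOn κ (Ici 0)) (t : ℝ) :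
    Continuous (LamTrunc d κ t) :=
  intervalIntegral.continuous_parametric_intervalIntegral_of_continuous'
    (continuous_const.sub (hκ.comp_continuous (by fun_prop)
      fun p => mem_Ici.2 (by positivity))) 0 t

lemma measurable_lam (hκ : ContinuousOn κ (Ici 0)) : Measurable (Lam d κ) := by
  have hcont : Continuous fun p : Ed d × ℝ => 1 - κ (exp (-p.2) * ‖p.1‖) :=
    continuous_const.sub (hκ.comp_continuous (by fun_prop)
      fun p => mem_Ici.2 (by positivity))
  exact (hcont.stronglyMeasurable.integral_prod_right'
    (ν := volume.restrict (Ioi 0))).measurable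

lemma integrable_exp_neg_mul_lam (hκ : LipschitzOnWith c κ (Ici 0)) (hκ0 : κ 0 = 1)
    (hκ1 : ∀ r : ℝ, 1 ≤ r → κ r = 0) {g : ℝ} (hg : (d : ℝ) < g) :
    Integrable fun y : Ed d => exp (-g * Lam d κ y) := by
  refine ((integrable_one_add_norm (by rwa [finrank_euclideanSpace_fin])).const_mul
    (exp (g * (log 2 + c)))).mono' ?_ (ae_of_all _ fun y => ?_)
  · exact (measurable_exp.comp
      ((measurable_lam hκ.continuousOn).const_mul _)).aestronglyMeasurable
  · rw [Real.norm_eq_abs, abs_of_pos (exp_pos _)]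
    exact exp_neg_mul_lam_le hκ hκ0 hκ1 ((Nat.cast_nonneg d).trans hg.le) y

lemma tendsto_lamTrunc_lam (hκ : LipschitzOnWith c κ (Ici 0)) (hκ0 : κ 0 = 1) (y : Ed d) :
    Tendsto (fun t => LamTrunc d κ t y) atTop (𝓝 (Lam d κ y)) :=
  intervalIntegral_tendsto_integral_Ioi 0
    (integrableOn_one_sub_comp_exp_neg hκ hκ0 (norm_nonneg y) 0) tendsto_id

lemma tendsto_setIntegral_closedBall_exp_neg_mul_lamTrunc (hκ : LipschitzOnWith c κ (Ici 0))
    (hκ0 : κ 0 = 1) (hκ1 : ∀ r : ℝ, 1 ≤ r → κ r = 0) {g : ℝ} (hg : (d : ℝ) < g) :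
    Tendsto (fun t => ∫ y in Metric.closedBall (0 : Ed d) (exp t), exp (-g * LamTrunc d κ t y))
      atTop (𝓝 (∫ y, exp (-g * Lam d κ y))) := by
  have hg0 : 0 ≤ g := (Nat.cast_nonneg d).trans hg.le
  simp_rw [← integral_indicator Metric.isClosed_closedBall.measurableSet]
  refine tendsto_integral_filter_of_dominated_convergence
    (fun y => exp (g * c) * exp (-g * Lam d κ y)) ?_ ?_
    ((integrable_exp_neg_mul_lam hκ hκ0 hκ1 hg).const_mul _) (ae_of_all _ fun y => ?_)
  · exact Eventually.of_forall fun t =>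
      ((continuous_lamTrunc hκ.continuousOn t).const_mul (-g)).rexp.aestronglyMeasurable
        |>.indicator Metric.isClosed_closedBall.measurableSet
  · filter_upwards [eventually_ge_atTop 0] with t ht
    refine ae_of_all _ fun y => ?_
    by_cases hy : y ∈ Metric.closedBall (0 : Ed d) (exp t)
    · rw [indicator_of_mem hy, Real.norm_eq_abs, abs_of_pos (exp_pos _), ← exp_add]
      have := lam_le_lamTrunc_add hκ hκ0 ht (mem_closedBall_zero_iff.1 hy)
      exact exp_le_exp.2 (by nlinarith)
    · rw [indicator_of_notMem hy, norm_zero]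
      positivity
  · have hin : ∀ᶠ t in atTop, y ∈ Metric.closedBall (0 : Ed d) (exp t) := by
      filter_upwards [eventually_ge_atTop ‖y‖] with t ht
      exact mem_closedBall_zero_iff.2 (ht.trans (add_one_le_exp t |>.trans' (by linarith)))
    refine Tendsto.congr' (hin.mono fun t ht => (indicator_of_mem ht _).symm) ?_
    exact ((tendsto_lamTrunc_lam hκ hκ0 y).const_mul (-g)).rexp

end Lam

section Rescaling

variable {d : ℕ} {κ : ℝ → ℝ}

lemma khatt_exp_neg_smul (hκ : ContinuousOn κ (Ici 0)) (t : ℝ) (y : Ed d) :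
    Khatt d κ t (exp (-t) • y) = t - LamTrunc d κ t y := by
  have hnorm : ∀ u, exp u * ‖exp (-t) • y‖ = exp (-(t - u)) * ‖y‖ := fun u => by
    rw [norm_smul, Real.norm_of_nonneg (exp_pos _).le, ← mul_assoc, ← exp_add]
    ring_nf
  have hsub := intervalIntegral.integral_comp_sub_left (a := 0) (b := t)
    (fun s => κ (exp (-s) * ‖y‖)) t
  simp only [sub_zero, sub_self] at hsub
  rw [Khatt, LamTrunc, intervalIntegral.integral_sub intervalIntegrable_const
    ((continuous_comp_exp_neg_mul hκ (norm_nonneg y)).intervalIntegrable 0 t)]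
  simp_rw [hnorm, hsub]
  simp

lemma continuous_khatt (hκ : ContinuousOn κ (Ici 0)) (t : ℝ) :
    Continuous (Khatt d κ t) := by
  have hcont : Continuous fun p : Ed d × ℝ => κ (exp p.2 * ‖p.1‖) :=
    hκ.comp_continuous (by fun_prop) fun p => mem_Ici.2 (by positivity)
  exact intervalIntegral.continuous_parametric_intervalIntegral_of_continuous' hcont 0 t

lemma exp_mul_setIntegral_exp_mul_khatt (hκ : ContinuousOn κ (Ici 0)) (g t : ℝ) :
    exp ((d - g) * t) * ∫ z in Metric.closedBall (0 : Ed d) 1, exp (g * Khatt d κ t z) =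
      ∫ y in Metric.closedBall (0 : Ed d) (exp t), exp (-g * LamTrunc d κ t y) := by
  have hcov := Measure.setIntegral_comp_smul_of_pos volume (fun z => exp (g * Khatt d κ t z))
    (Metric.closedBall (0 : Ed d) (exp t)) (exp_pos (-t))
  rw [smul_closedBall _ _ (exp_pos t).le, smul_zero, Real.norm_of_nonneg (exp_pos _).le,
    ← exp_add, neg_add_cancel, exp_zero, finrank_euclideanSpace_fin, smul_eq_mul] at hcov
  have hpow : exp (-g * t) * ((exp (-t)) ^ d)⁻¹ = exp ((d - g) * t) := by
    rw [← exp_nat_mul, ← exp_neg, ← exp_add]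
    ring_nf
  symm
  calc ∫ y in Metric.closedBall (0 : Ed d) (exp t), exp (-g * LamTrunc d κ t y)
      = ∫ y in Metric.closedBall (0 : Ed d) (exp t),
          exp (-g * t) * exp (g * Khatt d κ t (exp (-t) • y)) := by
        simp_rw [khatt_exp_neg_smul hκ, ← exp_add]
        ring_nf
    _ = exp ((d - g) * t) * ∫ z in Metric.closedBall (0 : Ed d) 1, exp (g * Khatt d κ t z) := by
        rw [integral_const_mul, hcov, ← mul_assoc, hpow]

end Rescaling

theorem statement10_general
    (d : ℕ)
    (κ : ℝ → ℝ) (hκlip : ∃ c : NNReal, LipschitzOnWith c κ (Set.Ici 0))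
    (hκ0 : κ 0 = 1)
    (hκ1 : ∀ r : ℝ, 1 ≤ r → κ r = 0)
    (g : ℝ) (hg : (d : ℝ) < g) :
    -- Λ(y) is finite for every y
    (∀ y : Ed d, IntegrableOn (fun s : ℝ => 1 - κ (Real.exp (-s) * ‖y‖)) (Set.Ioi 0)) ∧
    -- ∫ e^{−g Λ(y)} dy < ∞
    Integrable (fun y : Ed d => Real.exp (-g * Lam d κ y)) ∧
    -- lim_{t→∞} e^{(d−g)t} ∫_{|z|≤1} ( e^{g K̂_t(z)} − 1 ) dz = ∫ e^{−g Λ(y)} dy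
    Tendsto (fun t : ℝ =>
        Real.exp (((d : ℝ) - g) * t) *
          ∫ z in Metric.closedBall (0 : Ed d) 1, (Real.exp (g * Khatt d κ t z) - 1))
      atTop (nhds (∫ y : Ed d, Real.exp (-g * Lam d κ y))) := by
  obtain ⟨c, hκ⟩ := hκlip
  refine ⟨fun y => integrableOn_one_sub_comp_exp_neg hκ hκ0 (norm_nonneg y) 0,
    integrable_exp_neg_mul_lam hκ hκ0 hκ1 hg, ?_⟩
  set V := volume.real (Metric.closedBall (0 : Ed d) 1)
  have hsplit : ∀ t, exp ((d - g) * t) *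
      ∫ z in Metric.closedBall (0 : Ed d) 1, (exp (g * Khatt d κ t z) - 1) =
        (∫ y in Metric.closedBall (0 : Ed d) (exp t), exp (-g * LamTrunc d κ t y)) -
          exp ((d - g) * t) * V := fun t => by
    have hK : IntegrableOn (fun z => exp (g * Khatt d κ t z)) (Metric.closedBall (0 : Ed d) 1) :=
      ((continuous_khatt hκ.continuousOn t).const_mul g).rexp.continuousOn.integrableOn_compact
        (isCompact_closedBall 0 1)
    rw [integral_sub hK (integrableOn_const measure_closedBall_lt_top.ne), mul_sub,
      exp_mul_setIntegral_exp_mul_khatt hκ.continuousOn, setIntegral_const, smul_eq_mul, mul_one]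
  have hdecay : Tendsto (fun t => exp ((d - g) * t) * V) atTop (𝓝 0) := by
    simpa using (tendsto_exp_atBot.comp
      (tendsto_id.const_mul_atTop_of_neg (sub_neg.2 hg))).mul_const V
  simpa [hsplit] using
    (tendsto_setIntegral_closedBall_exp_neg_mul_lamTrunc hκ hκ0 hκ1 hg).sub hdecay

theorem statement10
    (d : ℕ) (hd : 1 ≤ d)
    (κ : ℝ → ℝ) (hκlip : ∃ c : NNReal, LipschitzOnWith c κ (Set.Ici 0))
    (hκnn : ∀ r : ℝ, 0 ≤ r → 0 ≤ κ r) (hκ0 : κ 0 = 1)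
    (hκ1 : ∀ r : ℝ, 1 ≤ r → κ r = 0)
    (hκpd : PosDefKernel d Set.univ (fun x y => κ ‖x - y‖))
    (g : ℝ) (hg : (d : ℝ) < g) :
    -- Λ(y) is finite for every y
    (∀ y : Ed d, IntegrableOn (fun s : ℝ => 1 - κ (Real.exp (-s) * ‖y‖)) (Set.Ioi 0)) ∧
    -- ∫ e^{−g Λ(y)} dy < ∞
    Integrable (fun y : Ed d => Real.exp (-g * Lam d κ y)) ∧
    -- lim_{t→∞} e^{(d−g)t} ∫_{|z|≤1} ( e^{g K̂_t(z)} − 1 ) dz = ∫ e^{−g Λ(y)} dy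
    Tendsto (fun t : ℝ =>
        Real.exp (((d : ℝ) - g) * t) *
          ∫ z in Metric.closedBall (0 : Ed d) 1, (Real.exp (g * Khatt d κ t z) - 1))
      atTop (nhds (∫ y : Ed d, Real.exp (-g * Lam d κ y))) :=
  statement10_general d κ hκlip hκ0 hκ1 g hg
end
end

section
/- Let d ≥ 1. Define K̂(w) := ∫_0^∞ κ(e^t|w|) dt for w ∈ ℝ^d, and its double mollification K̂_ε(z) := ∫_{ℝ^d}∫_{ℝ^d} θ_ε(z₁) θ_ε(z₂) K̂(z − z₁ + z₂) dz₁ dz₂. Then: (i) for every fixed y ∈ ℝ^d, lim_{ε→0⁺} ( K̂_ε(εy) − log(1/ε) ) = ℓ_θ(y) − j_κ; and (ii) there exists a constant C > 0 such that for all ε ∈ (0,1/4) and all y ∈ ℝ^d with |y| ≤ ε^{−1} + 2, | K̂_ε(εy) − log(1/ε) − ℓ_θ(y) | ≤ C. -/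
open MeasureTheory Filter

noncomputable section

/-- `K̂(w) = ∫_0^∞ κ(e^t |w|) dt`. -/
def Khat (d : ℕ) (κ : ℝ → ℝ) (w : Ed d) : ℝ :=
  ∫ t in Set.Ioi (0:ℝ), κ (Real.exp t * ‖w‖)

/-- The double mollification `K̂_ε(z) = ∫∫ θ_ε(z₁) θ_ε(z₂) K̂(z − z₁ + z₂) dz₁ dz₂`. -/
def Khateps (d : ℕ) (κ : ℝ → ℝ) (θ : Ed d → ℝ) (ε : ℝ) (z : Ed d) : ℝ :=
  ∫ p : Ed d × Ed d, theps d θ ε p.1 * theps d θ ε p.2 * Khat d κ (z - p.1 + p.2)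

/-- `j_κ = ∫_0^∞ (1 − κ(e^{−t})) dt`. -/
def jkappa (κ : ℝ → ℝ) : ℝ := ∫ t in Set.Ioi (0:ℝ), (1 - κ (Real.exp (-t)))

/-- `ℓ_θ(z) = ∫∫ log(1/|z + z₁ − z₂|) θ(z₁) θ(z₂) dz₁ dz₂`. -/
def elltheta (d : ℕ) (θ : Ed d → ℝ) (z : Ed d) : ℝ :=
  ∫ p : Ed d × Ed d, Real.log (1 / ‖z + p.1 - p.2‖) * θ p.1 * θ p.2

open Set

namespace S14

variable {κ : ℝ → ℝ} {c : ℝ}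


def Tail (κ : ℝ → ℝ) (L : ℝ) : ℝ := ∫ u in Ioi L, (1 - κ (Real.exp (-u)))

variable {κ : ℝ → ℝ} {c : ℝ}

lemma cont_aux (hκc : ContinuousOn κ (Ici 0)) :
    Continuous fun u : ℝ => 1 - κ (Real.exp (-u)) :=
  continuous_const.sub <| hκc.comp_continuous (Real.continuous_exp.comp continuous_neg)
    (fun u => (Real.exp_pos _).le)

lemma abs_one_sub (hκ0 : κ 0 = 1)
    (hlip : ∀ a b : ℝ, 0 ≤ a → 0 ≤ b → |κ a - κ b| ≤ c * |a - b|) (u : ℝ) :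
    |1 - κ (Real.exp (-u))| ≤ c * Real.exp (-u) := by
  have := hlip 0 (Real.exp (-u)) le_rfl (Real.exp_pos _).le
  rw [hκ0] at this
  simpa [abs_of_nonneg (Real.exp_pos (-u)).le] using this

lemma integrableOn_one_sub (hκc : ContinuousOn κ (Ici 0)) (hκ0 : κ 0 = 1)
    (hlip : ∀ a b : ℝ, 0 ≤ a → 0 ≤ b → |κ a - κ b| ≤ c * |a - b|) (L : ℝ) :
    IntegrableOn (fun u => 1 - κ (Real.exp (-u))) (Ioi L) := by
  have hmaj : IntegrableOn (fun u : ℝ => c * Real.exp (-u)) (Ioi L) := by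
    have := (exp_neg_integrableOn_Ioi L (b := 1) one_pos).const_mul c
    simpa [IntegrableOn] using this
  refine hmaj.mono' ((cont_aux hκc).aestronglyMeasurable.restrict) ?_
  filter_upwards with u
  simpa [Real.norm_eq_abs] using abs_one_sub hκ0 hlip u

lemma tail_abs (hκc : ContinuousOn κ (Ici 0)) (hκ0 : κ 0 = 1)
    (hlip : ∀ a b : ℝ, 0 ≤ a → 0 ≤ b → |κ a - κ b| ≤ c * |a - b|) (hc : 0 ≤ c) (L : ℝ) :
    |Tail κ L| ≤ c * Real.exp (-L) := by
  have hmaj : IntegrableOn (fun u : ℝ => c * Real.exp (-u)) (Ioi L) := by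
    have := (exp_neg_integrableOn_Ioi L (b := 1) one_pos).const_mul c
    simpa [IntegrableOn] using this
  have h1 : |Tail κ L| ≤ ∫ u in Ioi L, c * Real.exp (-u) := by
    rw [Tail, ← Real.norm_eq_abs]
    refine norm_integral_le_of_norm_le hmaj ?_
    filter_upwards with u
    simpa [Real.norm_eq_abs] using abs_one_sub hκ0 hlip u
  have h2 : ∫ u in Ioi L, c * Real.exp (-u) = c * Real.exp (-L) := by
    rw [MeasureTheory.integral_const_mul, integral_exp_neg_Ioi]
  linarith [h1, h2.le, h2.ge]

lemma jkappa_split (hκc : ContinuousOn κ (Ici 0)) (hκ0 : κ 0 = 1)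
    (hlip : ∀ a b : ℝ, 0 ≤ a → 0 ≤ b → |κ a - κ b| ≤ c * |a - b|) {L : ℝ} (hL : 0 ≤ L) :
    jkappa κ = (∫ u in Ioc 0 L, (1 - κ (Real.exp (-u)))) + Tail κ L := by
  rw [jkappa, Tail, ← setIntegral_union (Ioc_disjoint_Ioi le_rfl) measurableSet_Ioi
    ((integrableOn_one_sub hκc hκ0 hlip 0).mono_set Ioc_subset_Ioi_self)
    (integrableOn_one_sub hκc hκ0 hlip L), Ioc_union_Ioi_eq_Ioi hL]

lemma jkappa_abs (hκc : ContinuousOn κ (Ici 0)) (hκ0 : κ 0 = 1)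
    (hlip : ∀ a b : ℝ, 0 ≤ a → 0 ≤ b → |κ a - κ b| ≤ c * |a - b|) (hc : 0 ≤ c) :
    |jkappa κ| ≤ c := by
  have := tail_abs hκc hκ0 hlip hc 0
  simpa [Tail, jkappa] using this

lemma Khat_of_ge_one {d : ℕ} (hκ1 : ∀ r : ℝ, 1 ≤ r → κ r = 0) {w : Ed d} (h1 : 1 ≤ ‖w‖) :
    Khat d κ w = 0 := by
  rw [Khat, setIntegral_congr_fun measurableSet_Ioi (g := fun _ => (0:ℝ))
    (fun t ht => hκ1 _ (le_trans (by simpa using h1) (by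
      have h2 : 1 ≤ Real.exp t := Real.one_le_exp (le_of_lt ht)
      nlinarith [norm_nonneg w]))), integral_zero]

lemma Khat_formula {d : ℕ} (hκc : ContinuousOn κ (Ici 0)) (hκ0 : κ 0 = 1)
    (hκ1 : ∀ r : ℝ, 1 ≤ r → κ r = 0)
    (hlip : ∀ a b : ℝ, 0 ≤ a → 0 ≤ b → |κ a - κ b| ≤ c * |a - b|)
    {w : Ed d} (h0 : w ≠ 0) (h1 : ‖w‖ ≤ 1) :
    Khat d κ w = Real.log (1 / ‖w‖) - jkappa κ + Tail κ (Real.log (1 / ‖w‖)) := by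
  set r : ℝ := ‖w‖ with hr
  have hrpos : 0 < r := norm_pos_iff.2 h0
  set a : ℝ := Real.log r with ha
  have haL : a ≤ 0 := Real.log_nonpos hrpos.le h1
  set g : ℝ → ℝ := fun s => κ (Real.exp s) with hg
  have hgc : Continuous g :=
    hκc.comp_continuous Real.continuous_exp (fun s => (Real.exp_pos _).le)
  have hL : Real.log (1 / r) = -a := by rw [one_div, Real.log_inv]
  -- Step A+B : Khat = ∫ s in Ioi a, g s
  have stepB : Khat d κ w = ∫ s in Ioi a, g s := by
    have key : ∀ t : ℝ, κ (Real.exp t * r) = g (t + a) := by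
      intro t
      rw [hg]
      simp only [Real.exp_add, ha, Real.exp_log hrpos]
    rw [Khat]
    simp only [← hr, key]
    rw [← integral_indicator measurableSet_Ioi]
    have eq2 : (Ioi (0:ℝ)).indicator (fun t => g (t + a)) =
        fun t => (Ioi a).indicator g (t + a) := by
      funext t
      by_cases h : (0:ℝ) < t
      · rw [indicator_of_mem (mem_Ioi.2 h), indicator_of_mem (by simpa using h)]
      · rw [indicator_of_notMem (by simpa using h), indicator_of_notMem (by simpa using h)]
    rw [eq2, integral_add_right_eq_self (fun t => (Ioi a).indicator g t) a,
      integral_indicator measurableSet_Ioi]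
  -- Step C : split
  have hInt1 : IntegrableOn g (Ioc a 0) := hgc.integrableOn_Ioc
  have hzero : ∀ s ∈ Ioi (0:ℝ), g s = 0 := fun s hs =>
    hκ1 _ (Real.one_le_exp (le_of_lt hs))
  have hInt2 : IntegrableOn g (Ioi 0) := by
    rw [integrableOn_congr_fun hzero measurableSet_Ioi]
    exact integrableOn_zero
  have stepC : ∫ s in Ioi a, g s = ∫ s in Ioc a 0, g s := by
    rw [← Ioc_union_Ioi_eq_Ioi haL,
      setIntegral_union (Ioc_disjoint_Ioi le_rfl) measurableSet_Ioi hInt1 hInt2,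
      setIntegral_congr_fun measurableSet_Ioi hzero, integral_zero, add_zero]
  -- Step D : reflect
  have stepD : ∫ s in Ioc a 0, g s = ∫ u in (0:ℝ)..(-a), κ (Real.exp (-u)) := by
    have := intervalIntegral.integral_comp_neg (a := (0:ℝ)) (b := -a) g
    rw [this]
    simp only [neg_neg, neg_zero]
    rw [intervalIntegral.integral_of_le haL]
  -- Step E : subtract
  have stepE : ∫ u in (0:ℝ)..(-a), κ (Real.exp (-u))
      = -a - ∫ u in Ioc 0 (-a), (1 - κ (Real.exp (-u))) := by
    have h1i : IntervalIntegrable (fun _ : ℝ => (1:ℝ)) volume 0 (-a) :=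
      intervalIntegrable_const
    have h2i : IntervalIntegrable (fun u : ℝ => 1 - κ (Real.exp (-u))) volume 0 (-a) :=
      (continuous_const.sub (hκc.comp_continuous
        (Real.continuous_exp.comp continuous_neg) (fun u => (Real.exp_pos _).le))).intervalIntegrable _ _
    have heq : (fun u : ℝ => κ (Real.exp (-u))) = fun u : ℝ => 1 - (1 - κ (Real.exp (-u))) := by
      funext u; ring
    rw [heq, intervalIntegral.integral_sub h1i h2i, intervalIntegral.integral_const,
      intervalIntegral.integral_of_le (by linarith : (0:ℝ) ≤ -a)]
    simp
  -- combine
  have hsplit := jkappa_split hκc hκ0 hlip (L := -a) (by linarith)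
  rw [stepB, stepC, stepD, stepE, hL]
  have : ∫ u in Ioc 0 (-a), (1 - κ (Real.exp (-u))) = jkappa κ - Tail κ (-a) := by
    rw [hsplit]; ring
  rw [this]; ring


lemma Khat_measurable (d : ℕ) (hκc : ContinuousOn κ (Ici 0)) :
    Measurable (Khat d κ) := by
  have hF : Continuous fun q : Ed d × ℝ => κ (Real.exp q.2 * ‖q.1‖) :=
    hκc.comp_continuous ((Real.continuous_exp.comp continuous_snd).mul
      (continuous_norm.comp continuous_fst)) (fun q => mem_Ici.2 (by positivity))
  exact (hF.stronglyMeasurable.integral_prod_right'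
    (ν := volume.restrict (Ioi (0:ℝ)))).measurable

def flog (d : ℕ) (x : Ed d) : ℝ := max (Real.log (1 / ‖x‖)) 0

lemma flog_nonneg {d : ℕ} (x : Ed d) : 0 ≤ flog d x := le_max_right _ _

lemma flog_measurable (d : ℕ) : Measurable (flog d) :=
  ((Real.measurable_log.comp (measurable_const.div measurable_norm)).max measurable_const)

lemma abs_log_le {d : ℕ} (x : Ed d) : |Real.log (1 / ‖x‖)| ≤ flog d x + ‖x‖ := by
  rcases eq_or_ne x 0 with rfl | hx
  · simp [flog]
  have hnx : 0 < ‖x‖ := norm_pos_iff.2 hx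
  rcases le_or_gt ‖x‖ 1 with h | h
  · have h0 : 0 ≤ Real.log (1 / ‖x‖) := by
      rw [one_div, Real.log_inv]
      simpa using Real.log_nonpos hnx.le h
    rw [abs_of_nonneg h0]
    have : Real.log (1/‖x‖) ≤ flog d x := le_max_left _ _
    linarith [hnx.le]
  · have h0 : Real.log (1 / ‖x‖) ≤ 0 := by
      rw [one_div, Real.log_inv]
      simpa using Real.log_nonneg h.le
    rw [abs_of_nonpos h0, one_div, Real.log_inv, neg_neg]
    have h2 : Real.log ‖x‖ ≤ ‖x‖ := (Real.log_le_sub_one_of_pos hnx).trans (by linarith)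
    have : 0 ≤ flog d x := flog_nonneg x
    linarith

lemma flog_integrable (d : ℕ) (hd : 1 ≤ d) : Integrable (flog d) := by
  haveI : Nonempty (Fin d) := ⟨⟨0, hd⟩⟩
  constructor
  · exact (flog_measurable d).aestronglyMeasurable
  · rw [hasFiniteIntegral_iff_ofReal (Eventually.of_forall flog_nonneg)]
    rw [lintegral_eq_lintegral_meas_lt volume (Eventually.of_forall flog_nonneg)
      (flog_measurable d).aemeasurable]
    have hset : ∀ t ∈ Ioi (0:ℝ), {a : Ed d | t < flog d a}
        = Metric.ball (0 : Ed d) (Real.exp (-t)) \ {0} := by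
      intro t ht
      ext x
      simp only [mem_setOf_eq, mem_diff, Metric.mem_ball, dist_zero_right, mem_singleton_iff]
      constructor
      · intro hx
        rcases eq_or_ne x 0 with rfl | hx0
        · simp [flog] at hx; linarith [mem_Ioi.1 ht]
        · have hnx : 0 < ‖x‖ := norm_pos_iff.2 hx0
          have h1 : t < Real.log (1 / ‖x‖) := by
            rcases lt_max_iff.1 hx with h | h
            · exact h
            · exact absurd h (not_lt.2 (mem_Ioi.1 ht).le)
          rw [one_div, Real.log_inv] at h1
          have h2 : Real.log ‖x‖ < -t := by linarith
          rw [Real.log_lt_iff_lt_exp hnx] at h2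
          exact ⟨h2, hx0⟩
      · rintro ⟨hx, hx0⟩
        have hnx : 0 < ‖x‖ := norm_pos_iff.2 hx0
        have h2 : Real.log ‖x‖ < -t := (Real.log_lt_iff_lt_exp hnx).2 hx
        have h1 : t < Real.log (1 / ‖x‖) := by rw [one_div, Real.log_inv]; linarith
        exact lt_max_iff.2 (Or.inl h1)
    rw [setLIntegral_congr_fun measurableSet_Ioi
      (fun t ht => by
        rw [hset t ht, measure_diff_null (measure_singleton _), Measure.addHaar_ball _ _ (Real.exp_pos _).le])]
    have hV : volume (Metric.ball (0:Ed d) 1) < ⊤ := measure_ball_lt_top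
    calc ∫⁻ t in Ioi (0:ℝ), ENNReal.ofReal (Real.exp (-t) ^ Module.finrank ℝ (Ed d))
          * volume (Metric.ball (0:Ed d) 1)
        ≤ ∫⁻ t in Ioi (0:ℝ), ENNReal.ofReal (Real.exp (-t)) * volume (Metric.ball (0:Ed d) 1) := by
          refine setLIntegral_mono' measurableSet_Ioi (fun t ht => ?_)
          refine mul_le_mul_left (ENNReal.ofReal_le_ofReal ?_) _
          have h1 : Real.exp (-t) ≤ 1 := Real.exp_le_one_iff.2 (by linarith [mem_Ioi.1 ht])
          have hfr : Module.finrank ℝ (Ed d) = d := finrank_euclideanSpace_fin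
          have h2 := pow_le_pow_of_le_one (Real.exp_pos (-t)).le h1
            (show 1 ≤ Module.finrank ℝ (Ed d) by rw [hfr]; exact hd)
          simpa using h2
      _ = (∫⁻ t in Ioi (0:ℝ), ENNReal.ofReal (Real.exp (-t))) * volume (Metric.ball (0:Ed d) 1) := by
          rw [lintegral_mul_const]
          exact (Real.measurable_exp.comp measurable_neg).ennreal_ofReal
      _ < ⊤ := by
          refine ENNReal.mul_lt_top ?_ hV
          have : IntegrableOn (fun t : ℝ => Real.exp (-t)) (Ioi 0) := by
            simpa using exp_neg_integrableOn_Ioi (0:ℝ) (b := 1) one_pos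
          exact this.lintegral_lt_top

lemma ae_ne (d : ℕ) (hd : 1 ≤ d) (y : Ed d) :
    ∀ᵐ p : Ed d × Ed d, y - p.1 + p.2 ≠ 0 := by
  haveI : Nonempty (Fin d) := ⟨⟨0, hd⟩⟩
  have hmeas : MeasurableSet {p : Ed d × Ed d | y - p.1 + p.2 = 0} := by
    have hcont : Continuous fun p : Ed d × Ed d => y - p.1 + p.2 := by
      fun_prop
    exact hcont.measurable (measurableSet_singleton 0)
  rw [ae_iff]
  have : {p : Ed d × Ed d | ¬ y - p.1 + p.2 ≠ 0} = {p : Ed d × Ed d | y - p.1 + p.2 = 0} := by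
    ext p; simp
  rw [this, Measure.volume_eq_prod, Measure.measure_prod_null hmeas]
  filter_upwards with x
  have : Prod.mk x ⁻¹' {p : Ed d × Ed d | y - p.1 + p.2 = 0} = {x - y} := by
    ext q
    simp only [mem_preimage, mem_setOf_eq, mem_singleton_iff]
    constructor
    · intro h
      have h2 : q - (x - y) = 0 := by rw [← h]; abel
      exact sub_eq_zero.1 h2
    · rintro rfl; abel
  simp [this, measure_singleton]


lemma prod_integrable (d : ℕ) {θ : Ed d → ℝ} (hθc : Continuous θ)
    (hθsupp : HasCompactSupport θ) {Cθ : ℝ} (hCθ : ∀ z, |θ z| ≤ Cθ)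
    {W : Ed d → ℝ} (hWm : Measurable W) (hWi : Integrable W) (y : Ed d) :
    Integrable (fun p : Ed d × Ed d => θ p.1 * θ p.2 * W (y - p.1 + p.2)) := by
  have hθint : Integrable θ := hθc.integrable_of_hasCompactSupport hθsupp
  have hmeas : AEStronglyMeasurable
      (fun p : Ed d × Ed d => θ p.1 * θ p.2 * W (y - p.1 + p.2)) volume := by
    refine (((hθc.measurable.comp measurable_fst).mul
      (hθc.measurable.comp measurable_snd)).mul
      (hWm.comp (((measurable_const.sub measurable_fst).add measurable_snd)))).aestronglyMeasurable
  rw [Measure.volume_eq_prod] at hmeas ⊢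
  rw [integrable_prod_iff hmeas]
  have hsect : ∀ x : Ed d, Integrable (fun q : Ed d => θ x * θ q * W (y - x + q)) := by
    intro x
    have hW' : Integrable (fun q : Ed d => W ((y - x) + q)) :=
      hWi.comp_add_left (y - x)
    have hbm := hW'.bdd_mul ((hθc.measurable.const_mul (θ x)).aestronglyMeasurable)
      (c := |θ x| * Cθ) (Eventually.of_forall fun q => by
        rw [Real.norm_eq_abs, abs_mul]
        exact mul_le_mul le_rfl (hCθ q) (abs_nonneg _) (abs_nonneg _))
    refine hbm.congr (Eventually.of_forall fun q => ?_)
    have : (y - x) + q = y - x + q := rfl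
    simp only [this]
  constructor
  · exact Eventually.of_forall fun x => by simpa using hsect x
  · have hmaj : Integrable (fun x : Ed d => |θ x| * (Cθ * ∫ q : Ed d, |W q|)) :=
      (hθint.abs.mul_const _)
    refine hmaj.mono' (hmeas.norm.integral_prod_right') ?_
    refine Eventually.of_forall fun x => ?_
    have hnn : 0 ≤ ∫ q : Ed d, ‖θ x * θ q * W (y - x + q)‖ :=
      integral_nonneg fun q => norm_nonneg _
    rw [Real.norm_eq_abs, abs_of_nonneg hnn]
    have hW' : Integrable (fun q : Ed d => W ((y - x) + q)) :=
      hWi.comp_add_left (y - x)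
    have step : ∫ q : Ed d, ‖θ x * θ q * W (y - x + q)‖
        ≤ ∫ q : Ed d, |θ x| * Cθ * |W ((y - x) + q)| := by
      refine integral_mono_of_nonneg (Eventually.of_forall fun q => norm_nonneg _)
        ((hW'.abs.const_mul _)) (Eventually.of_forall fun q => ?_)
      show ‖θ x * θ q * W (y - x + q)‖ ≤ |θ x| * Cθ * |W ((y - x) + q)|
      have h1 : ‖θ x * θ q * W (y - x + q)‖ = |θ x| * |θ q| * |W ((y - x) + q)| := by
        rw [Real.norm_eq_abs, abs_mul, abs_mul]
      rw [h1]
      exact mul_le_mul_of_nonneg_right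
        (mul_le_mul_of_nonneg_left (hCθ q) (abs_nonneg _)) (abs_nonneg _)
    have heq : ∫ q : Ed d, |θ x| * Cθ * |W ((y - x) + q)|
        = |θ x| * (Cθ * ∫ q : Ed d, |W q|) := by
      rw [MeasureTheory.integral_const_mul]
      have : ∫ q : Ed d, |W ((y - x) + q)| = ∫ q : Ed d, |W q| :=
        integral_add_left_eq_self (fun q => |W q|) (y - x)
      rw [this]; ring
    calc ∫ q : Ed d, ‖θ x * θ q * W (y - x + q)‖ ≤ _ := step
      _ = _ := heq

lemma Khateps_scale (d : ℕ) (κ : ℝ → ℝ) (θ : Ed d → ℝ) {ε : ℝ} (hε : 0 < ε) (y : Ed d) :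
    Khateps d κ θ ε (ε • y)
      = ∫ p : Ed d × Ed d, θ p.1 * θ p.2 * Khat d κ (ε • (y - p.1 + p.2)) := by
  have hεd : (0:ℝ) < ε ^ d := pow_pos hε d
  haveI : (volume : Measure (Ed d × Ed d)).IsAddHaarMeasure :=
    Measure.prod.instIsAddHaarMeasure volume volume
  have h := MeasureTheory.Measure.integral_comp_smul (μ := volume)
    (f := fun p : Ed d × Ed d =>
      theps d θ ε p.1 * theps d θ ε p.2 * Khat d κ (ε • y - p.1 + p.2)) ε
  have hfr : Module.finrank ℝ (Ed d × Ed d) = d + d := by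
    rw [Module.finrank_prod, finrank_euclideanSpace_fin]
  rw [hfr] at h
  have heq : ∀ p : Ed d × Ed d,
      theps d θ ε (ε • p).1 * theps d θ ε (ε • p).2 * Khat d κ (ε • y - (ε • p).1 + (ε • p).2)
      = ((ε ^ d)⁻¹ * (ε ^ d)⁻¹) * (θ p.1 * θ p.2 * Khat d κ (ε • (y - p.1 + p.2))) := by
    intro p
    have hs : ∀ x : Ed d, ε⁻¹ • ε • x = x := fun x => by
      rw [smul_smul, inv_mul_cancel₀ hε.ne', one_smul]
    have hv : ε • y - ε • p.1 + ε • p.2 = ε • (y - p.1 + p.2) := by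
      rw [smul_add, smul_sub]
    rw [theps, theps]
    simp only [Prod.smul_fst, Prod.smul_snd]
    rw [hs, hs, hv]
    ring
  simp only [heq] at h
  rw [MeasureTheory.integral_const_mul] at h
  have habs : |(ε ^ (d+d) : ℝ)⁻¹| = (ε^(d+d))⁻¹ := abs_of_pos (by positivity)
  rw [habs, smul_eq_mul] at h
  have h2 : (ε^(d+d):ℝ)⁻¹ = (ε^d)⁻¹ * (ε^d)⁻¹ := by rw [pow_add, mul_inv]
  rw [h2] at h
  rw [Khateps]
  exact (mul_left_cancel₀ (by positivity) h).symm


lemma main_est (d : ℕ) (hd : 1 ≤ d)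
    (hκc : ContinuousOn κ (Ici 0)) (hκ0 : κ 0 = 1) (hκ1 : ∀ r : ℝ, 1 ≤ r → κ r = 0)
    (hlip : ∀ a b : ℝ, 0 ≤ a → 0 ≤ b → |κ a - κ b| ≤ c * |a - b|) (hc1 : 1 ≤ c)
    {θ : Ed d → ℝ} (hθc : Continuous θ) (hθnn : ∀ x, 0 ≤ θ x)
    (hθsupp : tsupport θ ⊆ Metric.closedBall 0 1) (hθint : ∫ x : Ed d, θ x = 1)
    {ε : ℝ} (hε : 0 < ε) (hε1 : ε < 1) {y : Ed d} (hεy2 : ε * (‖y‖ + 2) ≤ 2) :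
    |Khateps d κ θ ε (ε • y) - (Real.log (1/ε) - jkappa κ) - elltheta d θ y|
      ≤ (2*c + Real.log 2) * min (ε * (‖y‖ + 2)) 1 := by
  have hc0 : (0:ℝ) < c := lt_of_lt_of_le one_pos hc1
  have hlog2 : (0:ℝ) < Real.log 2 := Real.log_pos one_lt_two
  have hθcs : HasCompactSupport θ :=
    IsCompact.of_isClosed_subset (isCompact_closedBall 0 1) (isClosed_tsupport θ) hθsupp
  obtain ⟨Cθ, hCθ⟩ := hθcs.exists_bound_of_continuous hθc
  have hCθ' : ∀ z, |θ z| ≤ Cθ := fun z => by simpa [Real.norm_eq_abs] using hCθ z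
  have hθi : Integrable θ := hθc.integrable_of_hasCompactSupport hθcs
  have hsupp_norm : ∀ z : Ed d, θ z ≠ 0 → ‖z‖ ≤ 1 := by
    intro z hz
    have := hθsupp (subset_tsupport θ (by simpa [Function.mem_support] using hz))
    simpa [Metric.mem_closedBall, dist_zero_right] using this
  set v : Ed d × Ed d → Ed d := fun p => y - p.1 + p.2 with hv_def
  have hv_le : ∀ p : Ed d × Ed d, θ p.1 * θ p.2 ≠ 0 → ‖v p‖ ≤ ‖y‖ + 2 := by
    intro p hp
    have h1 : θ p.1 ≠ 0 := fun h => hp (by rw [h, zero_mul])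
    have h2 : θ p.2 ≠ 0 := fun h => hp (by rw [h, mul_zero])
    calc ‖y - p.1 + p.2‖ ≤ ‖y - p.1‖ + ‖p.2‖ := norm_add_le _ _
      _ ≤ ‖y‖ + ‖p.1‖ + ‖p.2‖ := by linarith [norm_sub_le y p.1]
      _ ≤ ‖y‖ + 2 := by linarith [hsupp_norm _ h1, hsupp_norm _ h2]
  have hθθnn : ∀ p : Ed d × Ed d, 0 ≤ θ p.1 * θ p.2 :=
    fun p => mul_nonneg (hθnn _) (hθnn _)
  have hlog1ε : 0 ≤ Real.log (1/ε) := by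
    rw [one_div]
    exact Real.log_nonneg (one_le_inv_iff₀.2 ⟨hε, hε1.le⟩)
  have hjk : |jkappa κ| ≤ c := jkappa_abs hκc hκ0 hlip hc0.le
  have hwnorm : ∀ p : Ed d × Ed d, ‖ε • v p‖ = ε * ‖v p‖ := fun p => by
    rw [norm_smul, Real.norm_eq_abs, abs_of_pos hε]
  have hlogs : ∀ p : Ed d × Ed d, v p ≠ 0 →
      Real.log (1 / ‖ε • v p‖) = Real.log (1/ε) + Real.log (1 / ‖v p‖) := by
    intro p hvne
    have hs : 0 < ‖v p‖ := norm_pos_iff.2 hvne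
    rw [hwnorm p, one_div, one_div, one_div, mul_inv,
      Real.log_mul (ne_of_gt (by positivity)) (ne_of_gt (by positivity))]
  have hTailb : ∀ p : Ed d × Ed d, v p ≠ 0 →
      |Tail κ (Real.log (1 / ‖ε • v p‖))| ≤ c * (ε * ‖v p‖) := by
    intro p hvne
    have hs : 0 < ‖v p‖ := norm_pos_iff.2 hvne
    have h := tail_abs hκc hκ0 hlip hc0.le (Real.log (1 / ‖ε • v p‖))
    have hexp : Real.exp (-(Real.log (1 / ‖ε • v p‖))) = ε * ‖v p‖ := by
      rw [one_div, Real.log_inv, neg_neg, Real.exp_log (by rw [hwnorm p]; positivity)]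
      exact hwnorm p
    rw [hexp] at h
    exact h
  -- the three integrands
  set G : Ed d × Ed d → ℝ := fun p => θ p.1 * θ p.2 * Khat d κ (ε • v p) with hG_def
  set Lg : Ed d × Ed d → ℝ := fun p => θ p.1 * θ p.2 * Real.log (1 / ‖v p‖) with hLg_def
  set A : Ed d × Ed d → ℝ := fun p => θ p.1 * θ p.2 * (Real.log (1/ε) - jkappa κ) with hA_def
  have intθθ : Integrable (fun p : Ed d × Ed d => θ p.1 * θ p.2) := by
    rw [Measure.volume_eq_prod]
    exact hθi.mul_prod hθi
  have hθθ1 : ∫ p : Ed d × Ed d, θ p.1 * θ p.2 = 1 := by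
    rw [Measure.volume_eq_prod, integral_prod_mul, hθint, one_mul]
  have intA : Integrable A := intθθ.mul_const _
  have intflog : Integrable (fun p : Ed d × Ed d => θ p.1 * θ p.2 * flog d (v p)) :=
    prod_integrable d hθc hθcs hCθ' (flog_measurable d) (flog_integrable d hd) y
  have hLgmeas : AEStronglyMeasurable Lg volume := by
    refine Measurable.aestronglyMeasurable ?_
    refine ((hθc.measurable.comp measurable_fst).mul (hθc.measurable.comp measurable_snd)).mul ?_
    exact (Real.measurable_log.comp (measurable_const.div
      ((measurable_const.sub measurable_fst).add measurable_snd).norm))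
  have intLg : Integrable Lg := by
    refine (intflog.add (intθθ.mul_const (‖y‖ + 2))).mono' hLgmeas ?_
    refine Eventually.of_forall fun p => ?_
    show ‖Lg p‖ ≤ θ p.1 * θ p.2 * flog d (v p) + θ p.1 * θ p.2 * (‖y‖ + 2)
    rcases eq_or_ne (θ p.1 * θ p.2) 0 with h0 | h0
    · simp only [hLg_def, Real.norm_eq_abs, h0, zero_mul, abs_zero, add_zero]
      exact le_rfl
    · have h1 : |Real.log (1 / ‖v p‖)| ≤ flog d (v p) + ‖v p‖ := abs_log_le (v p)
      have h2 : ‖v p‖ ≤ ‖y‖ + 2 := hv_le p h0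
      have h3 : 0 ≤ θ p.1 * θ p.2 := hθθnn p
      simp only [hLg_def, Real.norm_eq_abs, abs_mul, abs_of_nonneg h3]
      calc θ p.1 * θ p.2 * |Real.log (1 / ‖v p‖)|
          ≤ θ p.1 * θ p.2 * (flog d (v p) + (‖y‖ + 2)) := by
            refine mul_le_mul_of_nonneg_left ?_ h3
            linarith
        _ = θ p.1 * θ p.2 * flog d (v p) + θ p.1 * θ p.2 * (‖y‖ + 2) := by ring
  have hGmeas : AEStronglyMeasurable G volume := by
    refine Measurable.aestronglyMeasurable ?_
    refine ((hθc.measurable.comp measurable_fst).mul (hθc.measurable.comp measurable_snd)).mul ?_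
    have hvm : Measurable fun p : Ed d × Ed d => ε • v p :=
      (((measurable_const.sub measurable_fst).add measurable_snd)).const_smul ε
    exact (Khat_measurable d hκc).comp hvm
  have intG : Integrable G := by
    refine ((intθθ.mul_const (Real.log (1/ε) + 2*c)).add intflog).mono' hGmeas ?_
    filter_upwards [ae_ne d hd y] with p hvne
    show ‖G p‖ ≤ θ p.1 * θ p.2 * (Real.log (1/ε) + 2*c) + θ p.1 * θ p.2 * flog d (v p)
    have hflognn : 0 ≤ flog d (v p) := flog_nonneg (v p)
    have hs : 0 < ‖v p‖ := norm_pos_iff.2 hvne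
    have hKb : |Khat d κ (ε • v p)| ≤ Real.log (1/ε) + flog d (v p) + 2*c := by
      rcases le_or_gt (ε * ‖v p‖) 1 with hεs | hεs
      · have hKf := Khat_formula (c := c) hκc hκ0 hκ1 hlip
          (smul_ne_zero hε.ne' hvne) (by rw [hwnorm p]; exact hεs)
        have hTail : |Tail κ (Real.log (1 / ‖ε • v p‖))| ≤ c := by
          have := hTailb p hvne
          nlinarith
        have hlognn : 0 ≤ Real.log (1 / ‖ε • v p‖) := by
          rw [one_div]
          refine Real.log_nonneg (one_le_inv_iff₀.2 ⟨by rw [hwnorm p]; positivity,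
            by rw [hwnorm p]; exact hεs⟩)
        have hflb : Real.log (1 / ‖v p‖) ≤ flog d (v p) := le_max_left _ _
        have h5 : Real.log (1 / ‖ε • v p‖) ≤ Real.log (1/ε) + flog d (v p) := by
          rw [hlogs p hvne]; linarith
        rw [hKf]
        rw [abs_le] at hjk hTail ⊢
        constructor <;> linarith
      · rw [Khat_of_ge_one hκ1 (by rw [hwnorm p]; linarith)]
        simp only [abs_zero]
        positivity
    calc ‖G p‖ = θ p.1 * θ p.2 * |Khat d κ (ε • v p)| := by
          rw [hG_def, Real.norm_eq_abs, abs_mul, abs_of_nonneg (hθθnn p)]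
      _ ≤ θ p.1 * θ p.2 * (Real.log (1/ε) + flog d (v p) + 2*c) :=
          mul_le_mul_of_nonneg_left hKb (hθθnn p)
      _ = θ p.1 * θ p.2 * (Real.log (1/ε) + 2*c) + θ p.1 * θ p.2 * flog d (v p) := by ring
  -- the identity
  set D : Ed d × Ed d → ℝ := fun p => G p - A p - Lg p with hD_def
  have intD : Integrable D := (intG.sub intA).sub intLg
  have hIA : ∫ p : Ed d × Ed d, A p = Real.log (1/ε) - jkappa κ := by
    rw [hA_def, MeasureTheory.integral_mul_const, hθθ1, one_mul]
  have hIL : ∫ p : Ed d × Ed d, Lg p = elltheta d θ y := by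
    have hswap := integral_prod_swap (μ := (volume : Measure (Ed d)))
      (ν := (volume : Measure (Ed d)))
      (f := fun q : Ed d × Ed d => Real.log (1/‖y + q.2 - q.1‖) * θ q.2 * θ q.1)
    simp only [Prod.fst_swap, Prod.snd_swap] at hswap
    rw [elltheta, Measure.volume_eq_prod, hswap]
    congr 1
    funext q
    simp only [hLg_def, hv_def]
    rw [sub_add_eq_add_sub]
    ring
  have hkey : Khateps d κ θ ε (ε • y) - (Real.log (1/ε) - jkappa κ) - elltheta d θ y
      = ∫ p : Ed d × Ed d, D p := by
    have h1 : Khateps d κ θ ε (ε • y) = ∫ p : Ed d × Ed d, G p := Khateps_scale d κ θ hε y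
    have i1 : Integrable (fun p : Ed d × Ed d => G p - A p) := intG.sub intA
    rw [h1, ← hIA, ← hIL, hD_def]
    rw [integral_sub i1 intLg, integral_sub intG intA]
  -- the bound
  set M : ℝ := (2*c + Real.log 2) * min (ε * (‖y‖ + 2)) 1 with hM_def
  have hmin_nonneg : 0 ≤ min (ε * (‖y‖ + 2)) 1 := le_min (by positivity) zero_le_one
  have hM_nonneg : 0 ≤ M := mul_nonneg (by linarith) hmin_nonneg
  have haebound : ∀ᵐ p : Ed d × Ed d, ‖D p‖ ≤ θ p.1 * θ p.2 * M := by
    filter_upwards [ae_ne d hd y] with p hvne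
    have hs : 0 < ‖v p‖ := norm_pos_iff.2 hvne
    rcases eq_or_ne (θ p.1 * θ p.2) 0 with h0 | h0
    · simp only [hD_def, hG_def, hA_def, hLg_def, h0, zero_mul, sub_zero, norm_zero]
      exact le_rfl
    · have hsle : ‖v p‖ ≤ ‖y‖ + 2 := hv_le p h0
      have hεs2 : ε * ‖v p‖ ≤ 2 :=
        le_trans (mul_le_mul_of_nonneg_left hsle hε.le) hεy2
      have hexpr : D p = θ p.1 * θ p.2 *
          (Khat d κ (ε • v p) - (Real.log (1/ε) - jkappa κ) - Real.log (1 / ‖v p‖)) := by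
        simp only [hD_def, hG_def, hA_def, hLg_def]
        ring
      have hEb : |Khat d κ (ε • v p) - (Real.log (1/ε) - jkappa κ) - Real.log (1 / ‖v p‖)|
          ≤ (2*c + Real.log 2) * min (ε * (‖y‖ + 2)) 1 := by
        rcases le_or_gt (ε * ‖v p‖) 1 with hεs | hεs
        · have hE : Khat d κ (ε • v p) - (Real.log (1/ε) - jkappa κ) - Real.log (1 / ‖v p‖)
              = Tail κ (Real.log (1 / ‖ε • v p‖)) := by
            rw [Khat_formula (c := c) hκc hκ0 hκ1 hlip
              (smul_ne_zero hε.ne' hvne) (by rw [hwnorm p]; exact hεs), hlogs p hvne]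
            ring
          rw [hE]
          have h1 := hTailb p hvne
          have h2 : ε * ‖v p‖ ≤ min (ε * (‖y‖ + 2)) 1 :=
            le_min (mul_le_mul_of_nonneg_left hsle hε.le) hεs
          calc |Tail κ (Real.log (1 / ‖ε • v p‖))| ≤ c * (ε * ‖v p‖) := h1
            _ ≤ (2*c + Real.log 2) * min (ε * (‖y‖ + 2)) 1 :=
              mul_le_mul (by linarith) h2 (by positivity) (by linarith)
        · have hmin1 : min (ε * (‖y‖ + 2)) 1 = 1 := by
            refine min_eq_right ?_
            calc (1:ℝ) ≤ ε * ‖v p‖ := hεs.le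
              _ ≤ ε * (‖y‖ + 2) := mul_le_mul_of_nonneg_left hsle hε.le
          rw [hmin1, mul_one]
          rw [Khat_of_ge_one hκ1 (by rw [hwnorm p]; linarith)]
          have hsum : Real.log (1/ε) + Real.log (1 / ‖v p‖) = - Real.log (ε * ‖v p‖) := by
            rw [one_div, one_div, Real.log_inv, Real.log_inv,
              Real.log_mul hε.ne' hs.ne']
            ring
          have hlognn : 0 ≤ Real.log (ε * ‖v p‖) := Real.log_nonneg (by linarith)
          have hlogle : Real.log (ε * ‖v p‖) ≤ Real.log 2 :=
            Real.log_le_log (by linarith) hεs2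
          have : (0:ℝ) - (Real.log (1/ε) - jkappa κ) - Real.log (1 / ‖v p‖)
              = jkappa κ + Real.log (ε * ‖v p‖) := by
            rw [show Real.log (ε * ‖v p‖) = -(Real.log (1/ε) + Real.log (1 / ‖v p‖)) by
              rw [hsum]; ring]
            ring
          rw [this]
          rw [abs_le] at hjk ⊢
          constructor <;> linarith
      rw [hexpr, Real.norm_eq_abs, abs_mul, abs_of_nonneg (hθθnn p)]
      exact mul_le_mul_of_nonneg_left hEb (hθθnn p)
  rw [hkey, ← Real.norm_eq_abs]
  calc ‖∫ p : Ed d × Ed d, D p‖ ≤ ∫ p : Ed d × Ed d, θ p.1 * θ p.2 * M :=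
        norm_integral_le_of_norm_le (intθθ.mul_const M) haebound
    _ = M := by rw [MeasureTheory.integral_mul_const, hθθ1, one_mul]


end S14

open S14 in
theorem statement14
    (d : ℕ) (hd : 1 ≤ d)
    (κ : ℝ → ℝ) (hκlip : ∃ c : NNReal, LipschitzOnWith c κ (Set.Ici 0))
    (hκnn : ∀ r : ℝ, 0 ≤ r → 0 ≤ κ r) (hκ0 : κ 0 = 1)
    (hκ1 : ∀ r : ℝ, 1 ≤ r → κ r = 0)
    (hκpd : PosDefKernel d Set.univ (fun x y => κ ‖x - y‖))
    (θ : Ed d → ℝ) (hθsmooth : ContDiff ℝ (⊤ : ℕ∞) θ) (hθnn : ∀ x, 0 ≤ θ x)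
    (hθsupp : tsupport θ ⊆ Metric.closedBall 0 1) (hθint : ∫ x : Ed d, θ x = 1) :
    (∀ y : Ed d,
      Tendsto (fun ε : ℝ => Khateps d κ θ ε (ε • y) - Real.log (1 / ε))
        (nhdsWithin 0 (Set.Ioi 0)) (nhds (elltheta d θ y - jkappa κ))) ∧
    (∃ C : ℝ, 0 < C ∧ ∀ ε : ℝ, 0 < ε → ε < 1 / 4 → ∀ y : Ed d, ‖y‖ ≤ ε⁻¹ + 2 →
      |Khateps d κ θ ε (ε • y) - Real.log (1 / ε) - elltheta d θ y| ≤ C) := by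
  obtain ⟨c₀, hlip₀⟩ := hκlip
  set c : ℝ := max (c₀ : ℝ) 1 with hc_def
  have hc1 : (1:ℝ) ≤ c := le_max_right _ _
  have hc0 : (0:ℝ) < c := lt_of_lt_of_le one_pos hc1
  have hlog2 : (0:ℝ) < Real.log 2 := Real.log_pos one_lt_two
  have hκc : ContinuousOn κ (Ici 0) := hlip₀.continuousOn
  have hlip : ∀ a b : ℝ, 0 ≤ a → 0 ≤ b → |κ a - κ b| ≤ c * |a - b| := by
    intro a b ha hb
    have h1 := hlip₀.dist_le_mul a ha b hb
    rw [Real.dist_eq, Real.dist_eq] at h1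
    calc |κ a - κ b| ≤ (c₀ : ℝ) * |a - b| := h1
      _ ≤ c * |a - b| := mul_le_mul_of_nonneg_right (le_max_left _ _) (abs_nonneg _)
  have hθc : Continuous θ := hθsmooth.continuous
  constructor
  · intro y
    set l : ℝ := elltheta d θ y - jkappa κ with hl_def
    set K : ℝ := (2*c + Real.log 2) * (‖y‖ + 2) with hK_def
    have hδ : (0:ℝ) < min 1 (‖y‖ + 2)⁻¹ := lt_min one_pos (by positivity)
    have hev : ∀ᶠ ε : ℝ in nhdsWithin 0 (Ioi 0),
        ‖Khateps d κ θ ε (ε • y) - Real.log (1 / ε) - l‖ ≤ K * ε := by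
      filter_upwards [Ioo_mem_nhdsGT_of_mem (by constructor <;> simp [hδ.le, hδ] : (0:ℝ) ∈ Ico 0 (min 1 (‖y‖ + 2)⁻¹))] with ε hε
      have hε0 : 0 < ε := hε.1
      have hε1 : ε < 1 := lt_of_lt_of_le hε.2 (min_le_left _ _)
      have hεinv : ε < (‖y‖ + 2)⁻¹ := lt_of_lt_of_le hε.2 (min_le_right _ _)
      have hεy1 : ε * (‖y‖ + 2) ≤ 1 := by
        rw [← inv_inv (‖y‖ + 2)]
        have h2 : (0:ℝ) < (‖y‖ + 2)⁻¹ := by positivity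
        calc ε * ((‖y‖ + 2)⁻¹)⁻¹ ≤ (‖y‖ + 2)⁻¹ * ((‖y‖ + 2)⁻¹)⁻¹ :=
              mul_le_mul_of_nonneg_right hεinv.le (by positivity)
          _ = 1 := mul_inv_cancel₀ h2.ne'
      have h := main_est d hd hκc hκ0 hκ1 hlip hc1 hθc hθnn hθsupp hθint hε0 hε1
        (y := y) (by linarith)
      have heq : Khateps d κ θ ε (ε • y) - Real.log (1 / ε) - l
          = Khateps d κ θ ε (ε • y) - (Real.log (1/ε) - jkappa κ) - elltheta d θ y := by
        rw [hl_def]; ring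
      rw [Real.norm_eq_abs, heq]
      calc |Khateps d κ θ ε (ε • y) - (Real.log (1/ε) - jkappa κ) - elltheta d θ y|
          ≤ (2*c + Real.log 2) * min (ε * (‖y‖ + 2)) 1 := h
        _ ≤ (2*c + Real.log 2) * (ε * (‖y‖ + 2)) :=
            mul_le_mul_of_nonneg_left (min_le_left _ _) (by linarith)
        _ = K * ε := by rw [hK_def]; ring
    have hg0 : Tendsto (fun ε : ℝ => K * ε) (nhdsWithin 0 (Ioi 0)) (nhds 0) := by
      have h1 : Tendsto (fun ε : ℝ => ε) (nhdsWithin (0:ℝ) (Ioi 0)) (nhds 0) :=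
        tendsto_id.mono_left nhdsWithin_le_nhds
      simpa using h1.const_mul K
    have h2 := squeeze_zero_norm' hev hg0
    have h3 := h2.add_const l
    simpa using h3
  · refine ⟨3*c + Real.log 2 + 1, by linarith, ?_⟩
    intro ε hε hε4 y hy
    have hεinv : ε * ε⁻¹ = 1 := mul_inv_cancel₀ hε.ne'
    have hεy2 : ε * (‖y‖ + 2) ≤ 2 := by
      calc ε * (‖y‖ + 2) ≤ ε * (ε⁻¹ + 4) := by nlinarith
        _ = 1 + 4 * ε := by rw [mul_add, hεinv]; ring
        _ ≤ 2 := by linarith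
    have h := main_est d hd hκc hκ0 hκ1 hlip hc1 hθc hθnn hθsupp hθint hε
      (by linarith) (y := y) hεy2
    have hjk : |jkappa κ| ≤ c := jkappa_abs hκc hκ0 hlip hc0.le
    have hM : (2*c + Real.log 2) * min (ε * (‖y‖ + 2)) 1 ≤ 2*c + Real.log 2 := by
      calc (2*c + Real.log 2) * min (ε * (‖y‖ + 2)) 1
          ≤ (2*c + Real.log 2) * 1 := mul_le_mul_of_nonneg_left (min_le_right _ _) (by linarith)
        _ = 2*c + Real.log 2 := mul_one _
    have heq : Khateps d κ θ ε (ε • y) - Real.log (1 / ε) - elltheta d θ y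
        = (Khateps d κ θ ε (ε • y) - (Real.log (1/ε) - jkappa κ) - elltheta d θ y) - jkappa κ := by
      ring
    rw [heq]
    rw [abs_le] at hjk ⊢
    have h' := h.trans hM
    rw [abs_le] at h'
    constructor <;> linarith
end
end

section
/- Let d ≥ 1, let D ⊆ ℝ^d be open, let L be continuous on D², and set K(x,y) := L(x,y) + log(1/|x−y|). Let μ be a positive Borel measure on D such that ∫_{D}∫_{D} |K(x,y)| μ(dx) μ(dy) < ∞. Then μ(D') < ∞ for every bounded open set D' whose closure is contained in D. -/
/-! Near the diagonal the logarithm dominates the locally bounded continuous part, so on a compact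
set `C ⊆ D` the kernel satisfies `K ≥ 1` at distance `< δ`. A piece `A` of `C` of diameter `< δ`
therefore has `μ(A)² ≤ ∫_A ∫_A |K| ≤ ∫_D ∫_D |K| < ∞`, and compactness of `closure D'` lets
finitely many such pieces cover it. -/

open MeasureTheory Filter
open scoped ENNReal Classical

noncomputable section

theorem measure_lt_top_of_one_le_of_setLIntegral_lintegral_lt_top {X : Type*} [MeasurableSpace X]
    {μ : Measure X} {f : X → X → ℝ≥0∞} {A S : Set X} (hA : MeasurableSet A) (hAS : A ⊆ S)
    (hf : ∀ x ∈ A, ∀ y ∈ A, 1 ≤ f x y) (hfin : ∫⁻ x in S, ∫⁻ y in S, f x y ∂μ ∂μ < ⊤) :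
    μ A < ⊤ := by
  have hsq : μ A * μ A ≤ ∫⁻ x in A, ∫⁻ y in A, f x y ∂μ ∂μ :=
    calc μ A * μ A = ∫⁻ _ in A, ∫⁻ _ in A, 1 ∂μ ∂μ := by
          rw [setLIntegral_one, setLIntegral_const]
      _ ≤ ∫⁻ x in A, ∫⁻ y in A, f x y ∂μ ∂μ :=
          lintegral_mono_ae <| ae_restrict_of_forall_mem hA fun x hx =>
            lintegral_mono_ae <| ae_restrict_of_forall_mem hA fun y hy => hf x hx y hy
  have hmono : ∫⁻ x in A, ∫⁻ y in A, f x y ∂μ ∂μ ≤ ∫⁻ x in S, ∫⁻ y in S, f x y ∂μ ∂μ :=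
    (lintegral_mono fun _ => lintegral_mono_set hAS).trans (lintegral_mono_set hAS)
  exact ENNReal.mul_self_lt_top_iff.1 (hsq.trans_lt (hmono.trans_lt hfin))

theorem IsCompact.measure_lt_top_of_one_le_of_dist_lt {X : Type*} [MetricSpace X]
    [MeasurableSpace X] [OpensMeasurableSpace X] {μ : Measure X} {f : X → X → ℝ≥0∞}
    {C S : Set X} (hC : IsCompact C) (hCS : C ⊆ S) {δ : ℝ} (hδ : 0 < δ)
    (hf : ∀ x ∈ C, ∀ y ∈ C, dist x y < δ → 1 ≤ f x y)
    (hfin : ∫⁻ x in S, ∫⁻ y in S, f x y ∂μ ∂μ < ⊤) :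
    μ C < ⊤ := by
  refine hC.measure_lt_top_of_nhdsWithin fun c _ => ?_
  refine ⟨C ∩ Metric.ball c (δ / 2),
    inter_mem_nhdsWithin C (Metric.ball_mem_nhds c (half_pos hδ)), ?_⟩
  refine measure_lt_top_of_one_le_of_setLIntegral_lintegral_lt_top
    (hC.isClosed.measurableSet.inter Metric.isOpen_ball.measurableSet)
    (Set.inter_subset_left.trans hCS) (fun x hx y hy => hf x hx.1 y hy.1 ?_) hfin
  calc dist x y ≤ dist x c + dist y c := dist_triangle_right x y c
    _ < δ / 2 + δ / 2 := add_lt_add hx.2 hy.2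
    _ = δ := add_halves δ

theorem IsCompact.exists_pos_one_le_add_log_one_div_norm_sub {E : Type*}
    [SeminormedAddCommGroup E] {C : Set E} {L : E → E → ℝ} (hC : IsCompact C)
    (hL : ContinuousOn (fun p : E × E => L p.1 p.2) (C ×ˢ C)) :
    ∃ δ > 0, ∀ x ∈ C, ∀ y ∈ C, 0 < ‖x - y‖ → ‖x - y‖ < δ →
      1 ≤ L x y + Real.log (1 / ‖x - y‖) := by
  obtain ⟨M, hM⟩ := (hC.prod hC).exists_bound_of_continuousOn hL
  refine ⟨Real.exp (-(M + 1)), Real.exp_pos _, fun x hx y hy hpos hlt => ?_⟩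
  have hLM : -M ≤ L x y := neg_le_of_abs_le (hM (x, y) ⟨hx, hy⟩)
  have hlog : Real.log ‖x - y‖ < -(M + 1) := by
    simpa only [Real.log_exp] using Real.log_lt_log hpos hlt
  rw [one_div, Real.log_inv]
  linarith

theorem statement19_general
    (d : ℕ)
    (D : Set (Ed d))
    (K L : Ed d → Ed d → ℝ)
    (hLcont : ContinuousOn (fun p : Ed d × Ed d => L p.1 p.2) (D ×ˢ D))
    (hKdef : ∀ x ∈ D, ∀ y ∈ D, x ≠ y → K x y = L x y + Real.log (1 / ‖x - y‖))
    (μ : Measure (Ed d))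
    -- ∫_D ∫_D |K(x,y)| μ(dx) μ(dy) < ∞ (with |K(x,x)| = +∞, since K(x,x) = L(x,x) + log(1/0))
    (hμK : (∫⁻ x in D, ∫⁻ y in D,
        (if x = y then (⊤ : ℝ≥0∞) else ENNReal.ofReal |K x y|) ∂μ ∂μ) < ⊤)
    (D' : Set (Ed d)) (hD'b : Bornology.IsBounded D')
    (hD'cl : closure D' ⊆ D) :
    μ D' < ⊤ := by
  have hC : IsCompact (closure D') := hD'b.isCompact_closure
  obtain ⟨δ, hδ, hK⟩ := hC.exists_pos_one_le_add_log_one_div_norm_sub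
    (hLcont.mono (Set.prod_mono hD'cl hD'cl))
  refine (measure_mono subset_closure).trans_lt <|
    hC.measure_lt_top_of_one_le_of_dist_lt hD'cl hδ (fun x hx y hy hxy => ?_) hμK
  by_cases hne : x = y
  · simp [hne]
  rw [if_neg hne, ENNReal.one_le_ofReal, hKdef x (hD'cl hx) y (hD'cl hy) hne]
  rw [dist_eq_norm] at hxy
  exact (hK x hx y hy (norm_pos_iff.2 (sub_ne_zero.2 hne)) hxy).trans (le_abs_self _)

theorem statement19
    (d : ℕ) (hd : 1 ≤ d)
    (D : Set (Ed d)) (hD : IsOpen D)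
    (K L : Ed d → Ed d → ℝ)
    (hLcont : ContinuousOn (fun p : Ed d × Ed d => L p.1 p.2) (D ×ˢ D))
    (hKdef : ∀ x ∈ D, ∀ y ∈ D, x ≠ y → K x y = L x y + Real.log (1 / ‖x - y‖))
    (μ : Measure (Ed d))
    -- ∫_D ∫_D |K(x,y)| μ(dx) μ(dy) < ∞ (with |K(x,x)| = +∞, since K(x,x) = L(x,x) + log(1/0))
    (hμK : (∫⁻ x in D, ∫⁻ y in D,
        (if x = y then (⊤ : ℝ≥0∞) else ENNReal.ofReal |K x y|) ∂μ ∂μ) < ⊤)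
    (D' : Set (Ed d)) (hD'o : IsOpen D') (hD'b : Bornology.IsBounded D')
    (hD'cl : closure D' ⊆ D) :
    μ D' < ⊤ :=
  statement19_general d D K L hLcont hKdef μ hμK D' hD'b hD'cl
end
end
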